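/- arXiv:2112.14979 — 6 statements merged into one kernel-verified Lean document; each statement's English description precedes it below -/
import Mathlib

section
/- Let E ⊆ ℝⁿ be bounded open with vol(E) = 1, let 𝓡 be a finite measurable partition of E with M elements such that vol(R) ≥ ε and diam(R) ≤ δ for every R ∈ 𝓡, and let X₁,…,X_N be i.i.d. uniform samples from E. Then the probability that the union of closed balls of radius δ centered at the samples covers E is at least 1 - M·exp(-ε·N). -/
/-!
A sample lying in a cell `R` of diameter at most `δ` puts all of `R` inside its `δ`-ball, so the
balls fail to cover `E` only if some cell receives no sample. A fixed cell is missed by one uniform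
sample with probability `1 - vol R ≤ 1 - ε ≤ exp (-ε)`, hence by all `N` independent samples with
probability at most `exp (-ε N)`; a union bound over the `M` cells finishes the proof.
-/

open MeasureTheory Metric Set ProbabilityTheory
open scoped ENNReal

lemma ENNReal.one_sub_ofReal_le_ofReal_exp_neg (x : ℝ) :
    1 - ENNReal.ofReal x ≤ ENNReal.ofReal (Real.exp (-x)) := by
  rcases le_total x 0 with hx | hx
  · calc 1 - ENNReal.ofReal x ≤ 1 := tsub_le_self
      _ ≤ ENNReal.ofReal (Real.exp (-x)) :=
        ENNReal.one_le_ofReal.mpr (Real.one_le_exp (neg_nonneg.mpr hx))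
  · rw [← ENNReal.ofReal_one, ← ENNReal.ofReal_sub 1 hx]
    exact ENNReal.ofReal_le_ofReal (by linarith [Real.add_one_le_exp (-x)])

lemma ENNReal.ofReal_exp_neg_pow (x : ℝ) (N : ℕ) :
    ENNReal.ofReal (Real.exp (-x)) ^ N = ENNReal.ofReal (Real.exp (-x * N)) := by
  rw [← ENNReal.ofReal_pow (Real.exp_nonneg _), ← Real.exp_nat_mul]
  ring_nf

lemma measure_inter_compl_le_ofReal_exp_neg {α : Type*} [MeasurableSpace α] {μ : Measure α}
    {E R : Set α} {ε : ℝ} (hE : μ E = 1) (hR : MeasurableSet R) (hRE : R ⊆ E)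
    (hvol : ENNReal.ofReal ε ≤ μ R) :
    μ (Rᶜ ∩ E) ≤ ENNReal.ofReal (Real.exp (-ε)) := by
  have hRfin : μ R ≠ ∞ := ne_top_of_le_ne_top (hE ▸ ENNReal.one_ne_top) (measure_mono hRE)
  rw [inter_comm, ← sdiff_eq, measure_sdiff hRE hR.nullMeasurableSet hRfin, hE]
  exact (tsub_le_tsub_left hvol 1).trans (ENNReal.one_sub_ofReal_le_ofReal_exp_neg ε)

lemma ProbabilityTheory.iIndepFun.measure_iInter_preimage_le_pow {Ω ι α : Type*}
    [MeasurableSpace Ω] [MeasurableSpace α] [Fintype ι] {P : Measure Ω} {X : ι → Ω → α}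
    (hX : iIndepFun X P) {S : Set α} (hS : MeasurableSet S) {q : ℝ≥0∞}
    (hq : ∀ i, P (X i ⁻¹' S) ≤ q) :
    P (⋂ i, X i ⁻¹' S) ≤ q ^ Fintype.card ι := by
  have hprod := hX.measure_inter_preimage_eq_mul Finset.univ (sets := fun _ => S) fun _ _ => hS
  simp only [Finset.mem_univ, iInter_true] at hprod
  rw [hprod, ← Finset.card_univ, ← Finset.prod_const]
  exact Finset.prod_le_prod' fun i _ => hq i

lemma subset_iUnion_closedBall_of_forall_cell_hit {α ι : Type*} [PseudoMetricSpace α]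
    {E : Set α} {𝓡 : Set (Set α)} {δ : ℝ} {x : ι → α} (hcover : E ⊆ ⋃₀ 𝓡)
    (hbdd : ∀ R ∈ 𝓡, Bornology.IsBounded R) (hdiam : ∀ R ∈ 𝓡, diam R ≤ δ)
    (hhit : ∀ R ∈ 𝓡, ∃ i, x i ∈ R) :
    E ⊆ ⋃ i, closedBall (x i) δ := by
  intro y hy
  obtain ⟨R, hR, hyR⟩ := hcover hy
  obtain ⟨i, hxR⟩ := hhit R hR
  exact mem_iUnion.mpr ⟨i, (dist_le_diam_of_mem (hbdd R hR) hyR hxR).trans (hdiam R hR)⟩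

lemma one_sub_le_measure_of_measure_compl_le {Ω : Type*} [MeasurableSpace Ω] {P : Measure Ω}
    [IsProbabilityMeasure P] {A : Set Ω} {a : ℝ≥0∞} (h : P Aᶜ ≤ a) : 1 - a ≤ P A := by
  rw [tsub_le_iff_right]
  calc 1 = P univ := measure_univ.symm
    _ ≤ P A + P Aᶜ := measure_univ_le_add_compl A
    _ ≤ P A + a := add_le_add_right h _

theorem good_partition_cover_prob_general {n : ℕ}
    (E : Set (EuclideanSpace ℝ (Fin n)))
    (hEbdd : Bornology.IsBounded E) (hE1 : volume E = 1)
    (ε δ : ℝ)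
    (𝓡 : Finset (Set (EuclideanSpace ℝ (Fin n)))) (M : ℕ) (hM : 𝓡.card = M)
    (hmeas : ∀ R ∈ 𝓡, MeasurableSet R)
    (hcover : ⋃₀ (𝓡 : Set (Set (EuclideanSpace ℝ (Fin n)))) = E)
    (hvol : ∀ R ∈ 𝓡, ENNReal.ofReal ε ≤ volume R)
    (hdiam : ∀ R ∈ 𝓡, Metric.diam R ≤ δ)
    {Ω : Type*} [MeasurableSpace Ω] (P : Measure Ω) [IsProbabilityMeasure P]
    (N : ℕ) (X : Fin N → Ω → EuclideanSpace ℝ (Fin n))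
    (hindep : iIndepFun X P)
    (hunif : ∀ i, ∀ A : Set (EuclideanSpace ℝ (Fin n)), MeasurableSet A →
      P (X i ⁻¹' A) = volume (A ∩ E) / volume E) :
    1 - (M : ℝ≥0∞) * ENNReal.ofReal (Real.exp (-ε * N)) ≤
      P {ω | E ⊆ ⋃ i, Metric.closedBall (X i ω) δ} := by
  have hRE : ∀ R ∈ 𝓡, R ⊆ E := fun R hR => hcover ▸ subset_sUnion_of_mem hR
  have hmiss : ∀ R ∈ 𝓡, P (⋂ i, X i ⁻¹' Rᶜ) ≤ ENNReal.ofReal (Real.exp (-ε * N)) := by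
    intro R hR
    rw [← ENNReal.ofReal_exp_neg_pow]
    refine (hindep.measure_iInter_preimage_le_pow (hmeas R hR).compl fun i => ?_).trans_eq
      (by rw [Fintype.card_fin])
    rw [hunif i _ (hmeas R hR).compl, hE1, div_one]
    exact measure_inter_compl_le_ofReal_exp_neg hE1 (hmeas R hR) (hRE R hR) (hvol R hR)
  have hfail : {ω | E ⊆ ⋃ i, closedBall (X i ω) δ}ᶜ ⊆ ⋃ R ∈ 𝓡, ⋂ i, X i ⁻¹' Rᶜ := by
    intro ω hω
    by_contra hhit
    simp only [mem_iUnion, mem_iInter, mem_preimage, mem_compl_iff, not_exists, not_forall,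
      not_not] at hhit
    exact hω (subset_iUnion_closedBall_of_forall_cell_hit hcover.ge
      (fun R hR => hEbdd.subset (hRE R hR)) hdiam hhit)
  refine one_sub_le_measure_of_measure_compl_le ?_
  calc P {ω | E ⊆ ⋃ i, closedBall (X i ω) δ}ᶜ ≤ ∑ R ∈ 𝓡, P (⋂ i, X i ⁻¹' Rᶜ) :=
        (measure_mono hfail).trans (measure_biUnion_finset_le _ _)
    _ ≤ ∑ _R ∈ 𝓡, ENNReal.ofReal (Real.exp (-ε * N)) := Finset.sum_le_sum hmiss
    _ = M * ENNReal.ofReal (Real.exp (-ε * N)) := by rw [Finset.sum_const, hM, nsmul_eq_mul]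

theorem good_partition_cover_prob {n : ℕ}
    (E : Set (EuclideanSpace ℝ (Fin n))) (hEopen : IsOpen E)
    (hEbdd : Bornology.IsBounded E) (hE1 : volume E = 1)
    (ε δ : ℝ) (hε : 0 < ε) (hδ : 0 < δ)
    (𝓡 : Finset (Set (EuclideanSpace ℝ (Fin n)))) (M : ℕ) (hM : 𝓡.card = M)
    (hmeas : ∀ R ∈ 𝓡, MeasurableSet R)
    (hdisj : ∀ R ∈ 𝓡, ∀ R' ∈ 𝓡, R ≠ R' → Disjoint R R')
    (hcover : ⋃₀ (𝓡 : Set (Set (EuclideanSpace ℝ (Fin n)))) = E)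
    (hvol : ∀ R ∈ 𝓡, ENNReal.ofReal ε ≤ volume R)
    (hdiam : ∀ R ∈ 𝓡, Metric.diam R ≤ δ)
    {Ω : Type*} [MeasurableSpace Ω] (P : Measure Ω) [IsProbabilityMeasure P]
    (N : ℕ) (X : Fin N → Ω → EuclideanSpace ℝ (Fin n))
    (hindep : iIndepFun X P)
    (hunif : ∀ i, ∀ A : Set (EuclideanSpace ℝ (Fin n)), MeasurableSet A →
      P (X i ⁻¹' A) = volume (A ∩ E) / volume E) :
    1 - (M : ℝ≥0∞) * ENNReal.ofReal (Real.exp (-ε * N)) ≤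
      P {ω | E ⊆ ⋃ i, Metric.closedBall (X i ω) δ} :=
  good_partition_cover_prob_general E hEbdd hE1 ε δ 𝓡 M hM hmeas hcover hvol hdiam P N X hindep
    hunif
end

section
/- Let E be a bounded open subset of ℝⁿ such that reach(Eᶜ) > ρ > 0. Then for every 0 < δ < ρ there exists a finite measurable partition 𝓡 of E such that vol(R) ≥ δⁿ/n^{n/2} and diam(R) ≤ 3δ for all R ∈ 𝓡. -/
/-!
Tile `ℝⁿ` by half-open cubes of side `s = δ / √n`: each has diameter at most `δ` and volume
`δⁿ / n^(n/2)`. Keep the cubes lying in `E` and attach every other point of `E` to a kept cube at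
distance `< δ`, so that each piece has diameter at most `3δ`.

Such a cube exists because of the reach. Below the reach, `d = dist(·, Eᶜ)` grows at a rate
arbitrarily close to `1` when moving away from the unique nearest point (nearest points depend
semicontinuously on the base point). Maximising `min d δ - l * dist · p` over a ball turns this
local slope into a point `y` with `d y ≥ δ` and `dist y p < δ`, and the cube containing `y` lies
in `E`.
-/

open MeasureTheory Metric Set
open scoped ENNReal

/-- The set of points having a unique nearest point in `A`. -/
def Unp {n : ℕ} (A : Set (EuclideanSpace ℝ (Fin n))) : Set (EuclideanSpace ℝ (Fin n)) :=
  {x | ∃! a, a ∈ A ∧ dist x a = Metric.infDist x A}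

/-- Federer's reach of `A` at a point `a`. -/
noncomputable def reachAt {n : ℕ} (A : Set (EuclideanSpace ℝ (Fin n)))
    (a : EuclideanSpace ℝ (Fin n)) : ℝ≥0∞ :=
  sSup {r : ℝ≥0∞ | EMetric.ball a r ⊆ Unp A}

/-- Federer's reach of `A`. -/
noncomputable def reach {n : ℕ} (A : Set (EuclideanSpace ℝ (Fin n))) : ℝ≥0∞ :=
  ⨅ a ∈ A, reachAt A a

open Filter Topology
open scoped Function
open scoped RealInnerProductSpace

section NearestPoint

variable {X : Type*} [MetricSpace X] [ProperSpace X] {A : Set X}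

theorem eventually_dist_lt_of_unique_nearest (hA : IsClosed A) {x a : X}
    (huniq : ∀ b ∈ A, dist x b = infDist x A → b = a) {ε : ℝ} (hε : 0 < ε) :
    ∀ᶠ y in 𝓝 x, ∀ b ∈ A, dist y b = infDist y A → dist b a < ε := by
  rcases (A \ ball a ε).eq_empty_or_nonempty with hempty | hne
  · refine Eventually.of_forall fun y b hb _ => ?_
    by_contra hba
    exact hempty.subset ⟨hb, hba⟩
  obtain ⟨c, hc, hxc⟩ := (hA.sdiff isOpen_ball).exists_infDist_eq_dist hne x
  have hlt : infDist x A < infDist x (A \ ball a ε) := by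
    refine hxc ▸ (infDist_le_dist_of_mem hc.1).lt_of_ne fun h => hc.2 ?_
    rw [huniq c hc.1 h.symm]
    exact mem_ball_self hε
  filter_upwards [ball_mem_nhds x (half_pos (sub_pos.2 hlt))] with y hy b hb hyb
  by_contra hba
  have hxy : dist x y < (infDist x (A \ ball a ε) - infDist x A) / 2 := by
    rwa [dist_comm, ← mem_ball]
  have := infDist_le_dist_of_mem (x := x) (show b ∈ A \ ball a ε from ⟨hb, hba⟩)
  linarith [dist_triangle x y b, dist_comm x y,
    infDist_le_infDist_add_dist (x := y) (y := x) (s := A)]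

theorem exists_le_of_forall_exists_add_mul_dist_lt {f : X → ℝ} (hf : Continuous f) {c l : ℝ}
    (hl : 0 < l) {p : X} (hp : f p ≤ c)
    (hslope : ∀ x, f p ≤ f x → f x < c → ∀ r > 0,
      ∃ y, dist y x ≤ r ∧ f x + l * dist y x < f y) :
    ∃ y, c ≤ f y ∧ l * dist y p ≤ c - f p := by
  set g : X → ℝ := fun x => min (f x) c - l * dist x p
  have hR : 0 ≤ (c - f p) / l := div_nonneg (sub_nonneg.2 hp) hl.le
  obtain ⟨x, hxK, hmax⟩ := (isCompact_closedBall p ((c - f p) / l)).exists_isMaxOn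
    ⟨p, mem_closedBall_self hR⟩ (by fun_prop : Continuous g).continuousOn
  have hgx : f p ≤ g x := by
    have : g p ≤ g x := hmax (mem_closedBall_self hR)
    simpa only [g, dist_self, mul_zero, sub_zero, min_eq_left hp] using this
  by_cases hc : c ≤ f x
  · refine ⟨x, hc, ?_⟩
    simp only [g, min_eq_right hc] at hgx
    linarith
  push Not at hc
  simp only [g, min_eq_left hc.le] at hgx
  have hpx : f p ≤ f x := by nlinarith [dist_nonneg (x := x) (y := p)]
  obtain ⟨y, hyx, hy⟩ := hslope x hpx hc ((c - f x) / (2 * l)) (by positivity)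
  have hlyx : l * dist y x ≤ (c - f x) / 2 := by
    rw [le_div_iff₀ (by positivity)] at hyx
    linarith
  have hyp : l * dist y p ≤ l * dist y x + l * dist x p := by
    rw [← mul_add]; exact mul_le_mul_of_nonneg_left (dist_triangle y x p) hl.le
  have hyK : y ∈ closedBall p ((c - f p) / l) := by
    rw [mem_closedBall, le_div_iff₀ hl]
    linarith
  have hgy : g x < g y := by
    have : f x + l * dist y x < min (f y) c := lt_min hy (by linarith)
    simp only [g, min_eq_left hc.le]
    linarith
  exact absurd (hmax hyK) (not_le.2 hgy)

end NearestPoint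

theorem exists_dist_le_infDist_add_mul_lt {V : Type*} [NormedAddCommGroup V]
    [InnerProductSpace ℝ V] [ProperSpace V] {A : Set V} (hA : IsClosed A) {x a : V}
    (ha : a ∈ A) (hxa : dist x a = infDist x A)
    (huniq : ∀ b ∈ A, dist x b = infDist x A → b = a) (hx : x ∉ A) {l : ℝ} (hl0 : 0 ≤ l)
    (hl1 : l < 1) {r : ℝ} (hr : 0 < r) :
    ∃ y, dist y x ≤ r ∧ infDist x A + l * dist y x < infDist y A := by
  set d := infDist x A
  have hd : 0 < d := hxa ▸ dist_pos.2 (ne_of_mem_of_not_mem ha hx).symm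
  have hxa_norm : ‖x - a‖ = d := by rw [← dist_eq_norm, hxa]
  set u := d⁻¹ • (x - a)
  have hu : ‖u‖ = 1 := by
    rw [norm_smul, hxa_norm, Real.norm_eq_abs, abs_inv, abs_of_pos hd, inv_mul_cancel₀ hd.ne']
  have hxau : ⟪x - a, u⟫ = d := by
    rw [real_inner_smul_right, real_inner_self_eq_norm_sq, hxa_norm]
    field_simp
  -- small enough that `(d + l * t) ^ 2 < d ^ 2 + 2 * t * (d - ε) + t ^ 2`, a lower bound for
  -- `infDist (x + t • u) A ^ 2` once its nearest points are `ε`-close to `a`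
  set ε := (1 - l) * d / 2
  have hray : Tendsto (fun t : ℝ => x + t • u) (𝓝[>] 0) (𝓝 x) := by
    refine tendsto_nhdsWithin_of_tendsto_nhds ?_
    exact (by fun_prop : Continuous fun t : ℝ => x + t • u).tendsto' 0 x (by simp)
  obtain ⟨t, hnear, ht0, htr⟩ := ((hray.eventually (eventually_dist_lt_of_unique_nearest hA huniq
    (by positivity : 0 < ε))).and (Ioc_mem_nhdsGT hr)).exists
  set y := x + t • u
  have hyx : dist y x = t := by
    rw [dist_eq_norm, add_sub_cancel_left, norm_smul, hu, mul_one, Real.norm_eq_abs, abs_of_pos ht0]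
  obtain ⟨b, hb, hyb⟩ := hA.exists_infDist_eq_dist ⟨a, ha⟩ y
  have hba : dist b a < ε := hnear b hb hyb.symm
  have hinner : d - ε ≤ ⟪x - b, u⟫ := by
    have hab : ⟪x - b, u⟫ = d + ⟪a - b, u⟫ := by
      rw [← hxau, ← inner_add_left, sub_add_sub_cancel]
    have := real_inner_le_norm (b - a) u
    rw [hu, mul_one, ← dist_eq_norm] at this
    rw [hab, ← neg_sub b a, inner_neg_left]
    linarith
  have hsq : infDist y A ^ 2 = ‖x - b‖ ^ 2 + 2 * t * ⟪x - b, u⟫ + t ^ 2 := by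
    have hyb' : y - b = (x - b) + t • u := by simp only [y]; abel
    rw [hyb, dist_eq_norm, hyb', norm_add_sq_real,
      real_inner_smul_right, norm_smul, hu, Real.norm_eq_abs, abs_of_pos ht0]
    ring
  have hxb : d ≤ ‖x - b‖ := dist_eq_norm x b ▸ infDist_le_dist_of_mem hb
  refine ⟨y, hyx ▸ htr, ?_⟩
  rw [hyx]
  refine lt_of_pow_lt_pow_left₀ 2 infDist_nonneg ?_
  rw [hsq]
  have hε : ε = (1 - l) * d / 2 := rfl
  nlinarith [mul_pos (mul_pos ht0 hd) (sub_pos.2 hl1), mul_le_mul_of_nonneg_left hinner ht0.le,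
    mul_nonneg (mul_nonneg ht0.le ht0.le)
      (mul_nonneg (sub_pos.2 hl1).le (by linarith : 0 ≤ 1 + l)),
    pow_le_pow_left₀ hd.le hxb 2]

section Reach

variable {n : ℕ} {A : Set (EuclideanSpace ℝ (Fin n))} {ρ : ℝ}

theorem mem_unp_of_dist_lt (hreach : ENNReal.ofReal ρ < reach A) {x b : EuclideanSpace ℝ (Fin n)}
    (hb : b ∈ A) (hxb : dist x b < ρ) : x ∈ Unp A := by
  obtain ⟨r, hr, hρr⟩ := lt_sSup_iff.1 (hreach.trans_le (iInf₂_le b hb))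
  refine hr (show edist x b < r from ?_)
  rw [edist_dist]
  exact ((ENNReal.ofReal_lt_ofReal_iff (dist_nonneg.trans_lt hxb)).2 hxb).trans hρr

theorem exists_le_infDist_of_infDist_lt_of_lt_reach (hA : IsClosed A)
    (hreach : ENNReal.ofReal ρ < reach A) {δ : ℝ} (hδρ : δ ≤ ρ) {p : EuclideanSpace ℝ (Fin n)}
    (hp0 : 0 < infDist p A) (hpδ : infDist p A < δ) :
    ∃ y, δ ≤ infDist y A ∧ dist y p < δ := by
  set d₀ := infDist p A
  have hAne : A.Nonempty := nonempty_iff_ne_empty.2 fun h => by simp [d₀, h] at hp0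
  have hδ : 0 < δ := hp0.trans hpδ
  -- any slope `l < 1` with `δ - d₀ < l * δ` would do
  set l := 1 - d₀ / (2 * δ)
  have hl0 : 0 < l := by
    have : d₀ / (2 * δ) < 1 / 2 := by rw [div_lt_iff₀ (by positivity)]; linarith
    linarith
  have hl1 : l < 1 := sub_lt_self 1 (by positivity)
  have hlδ : l * δ = δ - d₀ / 2 := by simp only [l]; field_simp
  have hslope : ∀ x, d₀ ≤ infDist x A → infDist x A < δ → ∀ r > 0,
      ∃ y, dist y x ≤ r ∧ infDist x A + l * dist y x < infDist y A := by
    intro x hpx hxδ r hr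
    obtain ⟨b, hb, hxb⟩ := (infDist_lt_iff hAne).1 (hxδ.trans_le hδρ)
    obtain ⟨a, ⟨ha, hxa⟩, huniq⟩ := mem_unp_of_dist_lt hreach hb hxb
    have hx : x ∉ A := fun hx => by linarith [infDist_zero_of_mem hx]
    exact exists_dist_le_infDist_add_mul_lt hA ha hxa (fun b hb h => huniq b ⟨hb, h⟩) hx
      hl0.le hl1 hr
  obtain ⟨y, hy, hyp⟩ := exists_le_of_forall_exists_add_mul_dist_lt (continuous_infDist_pt A)
    hl0 hpδ.le hslope
  exact ⟨y, hy, lt_of_mul_lt_mul_left (by linarith) hl0.le⟩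

end Reach

section GridCube

variable {n : ℕ}

def gridCube (s : ℝ) (k : Fin n → ℤ) : Set (EuclideanSpace ℝ (Fin n)) :=
  {x | ∀ i, (k i : ℝ) * s ≤ x i ∧ x i < ((k i : ℝ) + 1) * s}

noncomputable def gridIndex (s : ℝ) (x : EuclideanSpace ℝ (Fin n)) : Fin n → ℤ :=
  fun i => ⌊x i / s⌋

theorem gridCube_eq_preimage (s : ℝ) (k : Fin n → ℤ) :
    gridCube s k = (MeasurableEquiv.toLp 2 (Fin n → ℝ)).symm ⁻¹'
      univ.pi fun i => Ico ((k i : ℝ) * s) (((k i : ℝ) + 1) * s) := by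
  ext x
  simp [gridCube]

theorem measurableSet_gridCube (s : ℝ) (k : Fin n → ℤ) : MeasurableSet (gridCube s k) := by
  rw [gridCube_eq_preimage]
  exact (MeasurableEquiv.toLp 2 (Fin n → ℝ)).symm.measurable
    (MeasurableSet.univ_pi fun _ => measurableSet_Ico)

theorem volume_gridCube (s : ℝ) (k : Fin n → ℤ) :
    volume (gridCube s k) = ENNReal.ofReal s ^ n := by
  rw [gridCube_eq_preimage, (EuclideanSpace.volume_preserving_symm_measurableEquiv_toLp
    (Fin n)).measure_preimage (MeasurableSet.univ_pi fun _ => measurableSet_Ico).nullMeasurableSet,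
    volume_pi_pi]
  simp [Real.volume_Ico, add_mul]

theorem mem_gridCube_gridIndex {s : ℝ} (hs : 0 < s) (x : EuclideanSpace ℝ (Fin n)) :
    x ∈ gridCube s (gridIndex s x) := fun _ =>
  ⟨(le_div_iff₀ hs).1 (Int.floor_le _), (div_lt_iff₀ hs).1 (Int.lt_floor_add_one _)⟩

theorem gridIndex_eq_of_mem_gridCube {s : ℝ} (hs : 0 < s) {x : EuclideanSpace ℝ (Fin n)}
    {k : Fin n → ℤ} (hx : x ∈ gridCube s k) : gridIndex s x = k :=
  funext fun i => Int.floor_eq_iff.2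
    ⟨(le_div_iff₀ hs).2 (hx i).1, (div_lt_iff₀ hs).2 (hx i).2⟩

theorem pairwise_disjoint_gridCube {s : ℝ} (hs : 0 < s) :
    Pairwise (Disjoint on (gridCube (n := n) s)) := fun _ _ hkk' =>
  disjoint_left.2 fun _ hx hx' =>
    hkk' ((gridIndex_eq_of_mem_gridCube hs hx).symm.trans (gridIndex_eq_of_mem_gridCube hs hx'))

theorem dist_lt_of_mem_gridCube {s r : ℝ} (hr : 0 < r) (hsr : s * √n ≤ r) {k : Fin n → ℤ}
    {x y : EuclideanSpace ℝ (Fin n)} (hx : x ∈ gridCube s k) (hy : y ∈ gridCube s k) :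
    dist x y < r := by
  rw [EuclideanSpace.dist_eq, Real.sqrt_lt' hr]
  rcases isEmpty_or_nonempty (Fin n) with hn | hn
  · simp [sq_pos_of_pos hr]
  have hs : 0 < s := by obtain ⟨i⟩ := hn; linarith [(hx i).1, (hx i).2]
  calc ∑ i, dist (x i) (y i) ^ 2 < ∑ _i : Fin n, s ^ 2 := by
        refine Finset.sum_lt_sum_of_nonempty Finset.univ_nonempty fun i _ => ?_
        rw [Real.dist_eq, sq_lt_sq₀ (abs_nonneg _) hs.le, abs_lt]
        constructor <;> nlinarith [hx i, hy i]
    _ = (s * √n) ^ 2 := by simp [mul_pow, mul_comm]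
    _ ≤ r ^ 2 := pow_le_pow_left₀ (by positivity) hsr 2

theorem finite_setOf_gridCube_subset {s : ℝ} (hs : 0 < s) {E : Set (EuclideanSpace ℝ (Fin n))}
    (hE : Bornology.IsBounded E) : {k | gridCube s k ⊆ E}.Finite := by
  obtain ⟨M, hM⟩ := hE.subset_closedBall 0
  set K : Fin n → ℤ := fun _ => ⌈M / s⌉
  refine (Set.finite_Icc (-K) K).subset fun k hk => ?_
  have hcorner : WithLp.toLp 2 (fun i => (k i : ℝ) * s) ∈ gridCube s k := fun i =>
    ⟨le_rfl, by simp; linarith⟩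
  have hnorm := mem_closedBall_zero_iff.1 (hM (hk hcorner))
  have hcoord : ∀ i, |(k i : ℝ)| ≤ ⌈M / s⌉ := fun i => by
    have := (PiLp.norm_apply_le _ i).trans hnorm
    rw [Real.norm_eq_abs, abs_mul, abs_of_pos hs, ← le_div_iff₀ hs] at this
    exact this.trans (Int.le_ceil _)
  exact ⟨fun i => by have := (abs_le.1 (hcoord i)).1; exact_mod_cast this,
    fun i => by have := (abs_le.1 (hcoord i)).2; exact_mod_cast this⟩

end GridCube

theorem exists_gridCube_subset_mem_thickening {n : ℕ} {E : Set (EuclideanSpace ℝ (Fin n))}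
    (hE : IsOpen E) {ρ δ s : ℝ} (hreach : ENNReal.ofReal ρ < reach Eᶜ) (hδρ : δ ≤ ρ)
    (hδ : 0 < δ) (hs : 0 < s) (hsδ : s * √n ≤ δ) {x : EuclideanSpace ℝ (Fin n)} (hx : x ∈ E) :
    ∃ k, gridCube s k ⊆ E ∧ x ∈ thickening δ (gridCube s k) := by
  by_cases hfull : gridCube s (gridIndex s x) ⊆ E
  · exact ⟨_, hfull, self_subset_thickening hδ _ (mem_gridCube_gridIndex hs x)⟩
  obtain ⟨z, hz, hzE⟩ := not_subset.1 hfull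
  have hxz := dist_lt_of_mem_gridCube hδ hsδ (mem_gridCube_gridIndex hs x) hz
  have hx0 : 0 < infDist x Eᶜ :=
    (hE.isClosed_compl.notMem_iff_infDist_pos ⟨z, hzE⟩).1 (not_not.2 hx)
  obtain ⟨y, hy, hyx⟩ := exists_le_infDist_of_infDist_lt_of_lt_reach hE.isClosed_compl hreach
    hδρ hx0 ((infDist_le_dist_of_mem hzE).trans_lt hxz)
  refine ⟨gridIndex s y, fun w hw => ?_, mem_thickening_iff.2 ⟨y, mem_gridCube_gridIndex hs y,
    dist_comm x y ▸ hyx⟩⟩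
  by_contra hwE
  have hyw := dist_lt_of_mem_gridCube hδ hsδ (mem_gridCube_gridIndex hs y) hw
  linarith [infDist_le_dist_of_mem (x := y) (show w ∈ Eᶜ from hwE)]

theorem exists_measurable_finset_partition {X ι : Type*} [MeasurableSpace X] [Finite ι]
    {E : Set X} {C N : ι → Set X} (hCE : ∀ k, C k ⊆ E) (hC : Pairwise (Disjoint on C))
    (hEN : E ⊆ ⋃ k, N k) (hEm : MeasurableSet E) (hCm : ∀ k, MeasurableSet (C k))
    (hNm : ∀ k, MeasurableSet (N k)) :
    ∃ 𝓡 : Finset (Set X), (∀ R ∈ 𝓡, MeasurableSet R) ∧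
      (∀ R ∈ 𝓡, ∀ R' ∈ 𝓡, R ≠ R' → Disjoint R R') ∧ ⋃₀ (𝓡 : Set (Set X)) = E ∧
      ∀ R ∈ 𝓡, ∃ k, C k ⊆ R ∧ R ⊆ C k ∪ N k := by
  classical
  obtain ⟨m, ⟨e⟩⟩ := Finite.exists_equiv_fin ι
  set B := E \ ⋃ k, C k
  have hBm : ∀ k, MeasurableSet (B ∩ N k) := fun k =>
    (hEm.diff (MeasurableSet.iUnion hCm)).inter (hNm k)
  -- the points of `E` outside every `C k` go to the first `N k` containing them
  set D := disjointed fun i => B ∩ N (e.symm i)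
  have hDB : ∀ i, D i ⊆ B := fun i => (disjointed_subset _ i).trans inter_subset_left
  have hCD : ∀ k i, Disjoint (C k) (D i) := fun k i =>
    disjoint_of_subset_right (hDB i) (disjoint_sdiff_right.mono_left (subset_iUnion C k))
  set P : Fin m → Set X := fun i => C (e.symm i) ∪ D i
  refine ⟨Finset.univ.image P, ?_, ?_, ?_, ?_⟩
  · simp only [Finset.mem_image, Finset.mem_univ, true_and, forall_exists_index,
      forall_apply_eq_imp_iff]
    exact fun i => (hCm _).union (disjointedRec (fun _ _ ht => ht.diff (hBm _)) (hBm _))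
  · simp only [Finset.mem_image, Finset.mem_univ, true_and, forall_exists_index,
      forall_apply_eq_imp_iff]
    intro i j hij
    have hij : i ≠ j := fun h => hij (h ▸ rfl)
    refine Disjoint.union_left (Disjoint.union_right (hC (e.symm.injective.ne hij)) (hCD _ _))
      (Disjoint.union_right (hCD _ _).symm (disjoint_disjointed _ hij))
  · rw [Finset.coe_image, Finset.coe_univ, image_univ, sUnion_range, iUnion_union_distrib,
      iUnion_disjointed, ← inter_iUnion, e.symm.surjective.iUnion_comp C,
      e.symm.surjective.iUnion_comp N,
      inter_eq_left.2 (diff_subset.trans hEN), union_diff_cancel (iUnion_subset hCE)]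
  · simp only [Finset.mem_image, Finset.mem_univ, true_and, forall_exists_index,
      forall_apply_eq_imp_iff]
    exact fun i => ⟨e.symm i, subset_union_left,
      union_subset_union_right _ ((disjointed_subset _ i).trans inter_subset_right)⟩

theorem diam_le_three_mul_of_subset_cthickening {X : Type*} [PseudoMetricSpace X]
    {s R : Set X} {δ : ℝ} (hδ : 0 ≤ δ) (hs : ∀ x ∈ s, ∀ y ∈ s, dist x y ≤ δ)
    (hR : R ⊆ cthickening δ s) :
    diam R ≤ 3 * δ := by
  have hsb : Bornology.IsBounded s := isBounded_iff.2 ⟨δ, hs⟩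
  calc diam R ≤ diam (cthickening δ s) := diam_mono hR hsb.cthickening
    _ ≤ diam s + 2 * δ := diam_cthickening_le s hδ
    _ ≤ 3 * δ := by linarith [diam_le_of_forall_dist_le hδ hs]

theorem exists_pos_mul_sqrt_le_and_div_rpow_le_pow {δ : ℝ} (hδ : 0 < δ) (n : ℕ) :
    ∃ s, 0 < s ∧ s * √n ≤ δ ∧ δ ^ n / (n : ℝ) ^ ((n : ℝ) / 2) ≤ s ^ n := by
  -- `δ / √n` is the side for `n ≠ 0` only, as `√0 = 0`
  rcases n.eq_zero_or_pos with rfl | hn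
  · exact ⟨δ, hδ, by simp [hδ.le], by simp⟩
  have hsqrt : 0 < √(n : ℝ) := Real.sqrt_pos.2 (Nat.cast_pos.2 hn)
  refine ⟨δ / √n, div_pos hδ hsqrt, (div_mul_cancel₀ δ hsqrt.ne').le, le_of_eq ?_⟩
  rw [div_pow, Real.sqrt_eq_rpow, ← Real.rpow_natCast (_ ^ _) n,
    ← Real.rpow_mul (Nat.cast_nonneg n)]
  ring_nf

theorem good_partition_of_positive_reach_general {n : ℕ}
    (E : Set (EuclideanSpace ℝ (Fin n))) (hEopen : IsOpen E)
    (hEbdd : Bornology.IsBounded E)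
    (ρ : ℝ) (hreach : ENNReal.ofReal ρ < reach Eᶜ)
    (δ : ℝ) (hδ0 : 0 < δ) (hδρ : δ < ρ) :
    ∃ 𝓡 : Finset (Set (EuclideanSpace ℝ (Fin n))),
      (∀ R ∈ 𝓡, MeasurableSet R) ∧
      (∀ R ∈ 𝓡, ∀ R' ∈ 𝓡, R ≠ R' → Disjoint R R') ∧
      ⋃₀ (𝓡 : Set (Set (EuclideanSpace ℝ (Fin n)))) = E ∧
      ∀ R ∈ 𝓡, ENNReal.ofReal (δ ^ n / (n : ℝ) ^ ((n : ℝ) / 2)) ≤ volume R ∧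
        Metric.diam R ≤ 3 * δ := by
  obtain ⟨s, hs, hsδ, hsvol⟩ := exists_pos_mul_sqrt_le_and_div_rpow_le_pow hδ0 n
  set F := {k | gridCube s k ⊆ E}
  have : Finite F := (finite_setOf_gridCube_subset hs hEbdd).to_subtype
  have hcover : E ⊆ ⋃ k : F, thickening δ (gridCube s k) := fun x hx => by
    obtain ⟨k, hk, hxk⟩ :=
      exists_gridCube_subset_mem_thickening hEopen hreach hδρ.le hδ0 hs hsδ hx
    exact mem_iUnion.2 ⟨⟨k, hk⟩, hxk⟩
  obtain ⟨𝓡, hmeas, hdisj, hunion, hsandwich⟩ :=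
    exists_measurable_finset_partition (fun k : F => k.2)
      (fun _ _ hkk' => pairwise_disjoint_gridCube hs (Subtype.coe_injective.ne hkk')) hcover
      hEopen.measurableSet (fun k => measurableSet_gridCube s k.1)
      (fun _ => isOpen_thickening.measurableSet)
  refine ⟨𝓡, hmeas, hdisj, hunion, fun R hR => ?_⟩
  obtain ⟨k, hCR, hRN⟩ := hsandwich R hR
  constructor
  · calc ENNReal.ofReal (δ ^ n / (n : ℝ) ^ ((n : ℝ) / 2)) ≤ ENNReal.ofReal s ^ n := by
          rw [← ENNReal.ofReal_pow hs.le]; exact ENNReal.ofReal_le_ofReal hsvol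
      _ = volume (gridCube s k) := (volume_gridCube s k.1).symm
      _ ≤ volume R := measure_mono hCR
  · exact diam_le_three_mul_of_subset_cthickening hδ0.le
      (fun x hx y hy => (dist_lt_of_mem_gridCube hδ0 hsδ hx hy).le)
      (hRN.trans (union_subset (self_subset_cthickening _) (thickening_subset_cthickening _ _)))

theorem good_partition_of_positive_reach {n : ℕ}
    (E : Set (EuclideanSpace ℝ (Fin n))) (hEopen : IsOpen E)
    (hEbdd : Bornology.IsBounded E)
    (ρ : ℝ) (hρ : 0 < ρ) (hreach : ENNReal.ofReal ρ < reach Eᶜ)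
    (δ : ℝ) (hδ0 : 0 < δ) (hδρ : δ < ρ) :
    ∃ 𝓡 : Finset (Set (EuclideanSpace ℝ (Fin n))),
      (∀ R ∈ 𝓡, MeasurableSet R) ∧
      (∀ R ∈ 𝓡, ∀ R' ∈ 𝓡, R ≠ R' → Disjoint R R') ∧
      ⋃₀ (𝓡 : Set (Set (EuclideanSpace ℝ (Fin n)))) = E ∧
      ∀ R ∈ 𝓡, ENNReal.ofReal (δ ^ n / (n : ℝ) ^ ((n : ℝ) / 2)) ≤ volume R ∧
        Metric.diam R ≤ 3 * δ :=
  good_partition_of_positive_reach_general E hEopen hEbdd ρ hreach δ hδ0 hδρ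
end

section
/- If A ⊆ ℝⁿ satisfies reach(Aᶜ) > ρ > 0, then the set A equals its morphological opening by the open ball of radius ρ: A = (A ⊖ U(0,ρ)) + U(0,ρ), where A ⊖ F = {x : x + F ⊆ A} and + denotes Minkowski sum. -/
/-!
Let `C = Aᶜ` and `a ∈ A`, so `d = dist(a, C) > 0`; if `d ≥ ρ` take `c = a`. Otherwise maximize
`f x = min (dist(x, C)) ρ - θ ‖x - a‖` over the closed ball of radius `ρ` about `a`, where
`θ = 1 - d / (2ρ)`. Comparing with `f a = d` shows that the maximizer `c` lies within `ρ` of `a`.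
If `dist(c, C) < ρ`, then `c` has a unique nearest point `b ∈ C`. Near `c` the nearest points
depend continuously on the point, so moving `c` away from `b` raises `dist(·, C)` at rate `1 > θ`.
This would increase `f`, so `dist(c, C) ≥ ρ` and the ball `U(c, ρ) ⊆ A` contains `a`.
-/

open MeasureTheory Metric Set
open scoped ENNReal Pointwise

/-- Morphological erosion `A ⊖ F = {x : x + F ⊆ A}`. -/
def erosion {n : ℕ} (A F : Set (EuclideanSpace ℝ (Fin n))) : Set (EuclideanSpace ℝ (Fin n)) :=
  {x | ∀ f ∈ F, x + f ∈ A}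

open Filter Topology
open scoped RealInnerProductSpace

section MetricSpace

variable {X : Type*} [MetricSpace X] {C : Set X}

theorem mem_of_infDist_eq_zero {ρ : ℝ} (hρ : 0 < ρ)
    (hunp : ∀ x, infDist x C < ρ → ∃! b, b ∈ C ∧ dist x b = infDist x C) {x : X}
    (hx : infDist x C = 0) : x ∈ C := by
  obtain ⟨b, ⟨hb, hxb⟩, -⟩ := hunp x (hx ▸ hρ)
  rw [hx, dist_eq_zero] at hxb
  rwa [hxb]

theorem tendsto_nearest_of_unique [ProperSpace X] {α : Type*} {l : Filter α} {x y : α → X}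
    {c b : X} (hC : IsClosed C) (huniq : ∀ z ∈ C, dist c z = infDist c C → z = b)
    (hx : Tendsto x l (𝓝 c)) (hyC : ∀ t, y t ∈ C)
    (hy : ∀ t, dist (x t) (y t) = infDist (x t) C) : Tendsto y l (𝓝 b) := by
  have hnear : ∀ ε > 0, ∀ᶠ t in l, y t ∈ C ∩ closedBall c (infDist c C + ε) := by
    intro ε hε
    filter_upwards [hx (ball_mem_nhds c (half_pos hε))] with t ht
    replace ht : dist (x t) c < ε / 2 := ht
    refine ⟨hyC t, ?_⟩
    rw [mem_closedBall]
    calc dist (y t) c ≤ dist (x t) (y t) + dist (x t) c := dist_triangle_left _ _ _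
      _ ≤ infDist c C + dist (x t) c + dist (x t) c := by
        rw [hy]; gcongr; exact infDist_le_infDist_add_dist
      _ ≤ infDist c C + ε := by linarith
  refine (isCompact_closedBall c (infDist c C + 1)).tendsto_nhds_of_unique_mapClusterPt
    ((hnear 1 one_pos).mono fun t ht => ht.2) fun z _ hz => ?_
  have hz_near : ∀ ε > 0, z ∈ C ∩ closedBall c (infDist c C + ε) := fun ε hε =>
    (hC.inter isClosed_closedBall).mem_of_mapClusterPt hz (hnear ε hε)
  have hzC : z ∈ C := (hz_near 1 one_pos).1
  refine huniq z hzC (le_antisymm (le_of_forall_pos_le_add fun ε hε => ?_)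
    (infDist_le_dist_of_mem hzC))
  rw [dist_comm]
  exact (hz_near ε hε).2

end MetricSpace

section InnerProductSpace

variable {E : Type*} [NormedAddCommGroup E] [InnerProductSpace ℝ E] {C : Set E}

theorem add_mul_lt_norm_add_smul {v u : E} {m θ h : ℝ} (hu : ‖u‖ = 1) (hm : 0 ≤ m)
    (hmv : m ≤ ‖v‖) (hθ₀ : 0 ≤ θ) (hθ₁ : θ ≤ 1) (hh : 0 < h) (hvu : θ * m < ⟪v, u⟫) :
    m + θ * h < ‖v + h • u‖ := by
  refine lt_of_pow_lt_pow_left₀ 2 (norm_nonneg _) ?_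
  rw [norm_add_sq_real, real_inner_smul_right, norm_smul, hu, Real.norm_of_nonneg hh.le]
  nlinarith [mul_le_mul hmv hmv hm (norm_nonneg v), mul_lt_mul_of_pos_left hvu hh,
    mul_le_mul_of_nonneg_right (mul_le_one₀ hθ₁ hθ₀ hθ₁) (sq_nonneg h)]

theorem tendsto_add_smul_nhdsGT (c u : E) :
    Tendsto (fun h : ℝ => c + h • u) (𝓝[>] 0) (𝓝 c) := by
  have hcont : Continuous fun h : ℝ => c + h • u := by fun_prop
  simpa using (hcont.tendsto 0).mono_left nhdsWithin_le_nhds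

variable [ProperSpace E]

theorem eventually_add_mul_lt_infDist_add_smul (hC : IsClosed C) {b c : E} (hb : b ∈ C)
    (hc : c ∉ C) (hcb : dist c b = infDist c C)
    (huniq : ∀ z ∈ C, dist c z = infDist c C → z = b) {θ : ℝ} (hθ : θ < 1) :
    ∀ᶠ h in 𝓝[>] 0, infDist c C + θ * h < infDist (c + h • ‖c - b‖⁻¹ • (c - b)) C := by
  set m := infDist c C
  set u := ‖c - b‖⁻¹ • (c - b)
  have hcb' : ‖c - b‖ = m := by rw [← dist_eq_norm, hcb]
  have hm : 0 < m := hcb ▸ dist_pos.2 (ne_of_mem_of_not_mem hb hc).symm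
  have hu : ‖u‖ = 1 := norm_smul_inv_norm (sub_ne_zero.2 (ne_of_mem_of_not_mem hb hc).symm)
  have hcbu : ⟪c - b, u⟫ = m := by
    rw [real_inner_smul_right, real_inner_self_eq_norm_sq, hcb']
    field_simp
  choose y hyC hy using fun h : ℝ => hC.exists_infDist_eq_dist ⟨b, hb⟩ (c + h • u)
  have hyb := tendsto_nearest_of_unique hC huniq (tendsto_add_smul_nhdsGT c u) hyC
    fun h => (hy h).symm
  have hinner : Tendsto (fun h => ⟪c - y h, u⟫) (𝓝[>] 0) (𝓝 m) :=
    hcbu ▸ (tendsto_const_nhds.sub hyb).inner tendsto_const_nhds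
  have hθm : max θ 0 * m < m := mul_lt_of_lt_one_left hm (max_lt hθ one_pos)
  filter_upwards [hinner.eventually (lt_mem_nhds hθm), self_mem_nhdsWithin]
    with h hvu (hh : 0 < h)
  calc m + θ * h ≤ m + max θ 0 * h := by gcongr; exact le_max_left θ 0
    _ < ‖(c - y h) + h • u‖ :=
      add_mul_lt_norm_add_smul hu hm.le (dist_eq_norm c (y h) ▸ infDist_le_dist_of_mem (hyC h))
        (le_max_right θ 0) (max_le hθ.le zero_le_one) hh hvu
    _ = infDist (c + h • u) C := by rw [hy, dist_eq_norm]; abel_nf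

theorem le_infDist_of_isLocalMax {ρ : ℝ} (hρ : 0 < ρ)
    (hunp : ∀ x, infDist x C < ρ → ∃! b, b ∈ C ∧ dist x b = infDist x C) {a c : E} {θ : ℝ}
    (hθ₀ : 0 ≤ θ) (hθ₁ : θ < 1) (hc : c ∉ C)
    (hmax : IsLocalMax (fun x => min (infDist x C) ρ - θ * dist x a) c) : ρ ≤ infDist c C := by
  by_contra! hm
  obtain ⟨b, ⟨hb, hcb⟩, huniq⟩ := hunp c hm
  have hC : IsClosed C := isClosed_of_closure_subset fun x hx =>
    mem_of_infDist_eq_zero hρ hunp (infDist_zero_of_mem_closure hx)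
  have hu : ‖‖c - b‖⁻¹ • (c - b)‖ = 1 :=
    norm_smul_inv_norm (sub_ne_zero.2 (ne_of_mem_of_not_mem hb hc).symm)
  obtain ⟨h, hgrow, hρm, hle, hh⟩ := ((eventually_add_mul_lt_infDist_add_smul hC hb hc hcb
    (fun z hz hcz => huniq z ⟨hz, hcz⟩) hθ₁).and
    ((eventually_nhdsWithin_of_eventually_nhds (eventually_lt_nhds (sub_pos.2 hm))).and
    (((tendsto_add_smul_nhdsGT c _).eventually hmax).and self_mem_nhdsWithin))).exists
  set x := c + h • ‖c - b‖⁻¹ • (c - b)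
  have hxa : dist x a ≤ dist c a + h := by
    have hxc : dist x c = h := by
      rw [dist_self_add_left, norm_smul, hu, mul_one, Real.norm_of_nonneg hh.le]
    linarith [dist_triangle x c a]
  have hmin : infDist c C + θ * h < min (infDist x C) ρ := lt_min hgrow (by nlinarith)
  have := mul_le_mul_of_nonneg_left hxa hθ₀
  simp only [min_eq_left hm.le] at hle
  linarith

theorem exists_dist_lt_le_infDist {ρ : ℝ} (hρ : 0 < ρ)
    (hunp : ∀ x, infDist x C < ρ → ∃! b, b ∈ C ∧ dist x b = infDist x C) {a : E}
    (ha : a ∉ C) : ∃ c, dist a c < ρ ∧ ρ ≤ infDist c C := by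
  set d := infDist a C
  have hd : 0 < d := infDist_nonneg.lt_of_ne fun h => ha (mem_of_infDist_eq_zero hρ hunp h.symm)
  rcases le_or_gt ρ d with hρd | hdρ
  · exact ⟨a, by simpa using hρ, hρd⟩
  -- any `θ ∈ (1 - d / ρ, 1)` works
  set θ := 1 - d / (2 * ρ)
  have hθd : d / (2 * ρ) < 1 / 2 := by rw [div_lt_iff₀ (by positivity)]; linarith
  have hθ₀ : 0 ≤ θ := by linarith
  have hθ₁ : θ < 1 := by linarith [show 0 < d / (2 * ρ) by positivity]
  have hθρ : ρ - d < θ * ρ := by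
    have : θ * ρ = ρ - d / 2 := by simp only [θ]; field_simp
    linarith
  set f : E → ℝ := fun x => min (infDist x C) ρ - θ * dist x a
  have hf : Continuous f := by
    have := continuous_infDist_pt C
    fun_prop
  obtain ⟨c, -, hmax⟩ := (isCompact_closedBall a ρ).exists_isMaxOn
    (nonempty_closedBall.2 hρ.le) hf.continuousOn
  have hfc : d ≤ f c := by
    have hfa : f a = d := by simp only [f, dist_self, mul_zero, sub_zero]; exact min_eq_left hdρ.le
    exact hfa ▸ hmax (mem_closedBall_self hρ.le)
  have hdist := dist_nonneg (x := c) (y := a)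
  have hca : dist c a < ρ := by
    have : θ * dist c a ≤ ρ - d := by linarith [min_le_right (infDist c C) ρ]
    nlinarith
  have hcC : c ∉ C := fun hc => by
    have := mul_nonneg hθ₀ hdist
    linarith [min_le_left (infDist c C) ρ, infDist_zero_of_mem hc]
  exact ⟨c, by rwa [dist_comm], le_infDist_of_isLocalMax hρ hunp hθ₀ hθ₁ hcC
    (hmax.isLocalMax (closedBall_mem_nhds_of_mem (mem_ball.2 hca)))⟩

end InnerProductSpace

theorem mem_unp_of_edist_lt_reach {n : ℕ} {A : Set (EuclideanSpace ℝ (Fin n))}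
    {x b : EuclideanSpace ℝ (Fin n)} (hb : b ∈ A) (hxb : edist x b < reach A) : x ∈ Unp A := by
  obtain ⟨r, hr, hxr⟩ := lt_sSup_iff.1 (hxb.trans_le (biInf_le _ hb))
  exact hr hxr

theorem erosion_add_subset {n : ℕ} (A F : Set (EuclideanSpace ℝ (Fin n))) :
    erosion A F + F ⊆ A := by
  rintro _ ⟨x, hx, f, hf, rfl⟩
  exact hx f hf

theorem subset_erosion_ball_add_ball {n : ℕ} {A : Set (EuclideanSpace ℝ (Fin n))} {ρ : ℝ}
    (h : ∀ a ∈ A, ∃ c, dist a c < ρ ∧ ball c ρ ⊆ A) :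
    A ⊆ erosion A (ball 0 ρ) + ball 0 ρ := by
  intro a ha
  obtain ⟨c, hac, hcA⟩ := h a ha
  refine ⟨c, fun f hf => hcA ?_, a - c, ?_, add_sub_cancel c a⟩
  · rwa [mem_ball, dist_self_add_left, ← dist_zero_right]
  · rwa [mem_ball, dist_zero_right, ← dist_eq_norm]

theorem opening_of_positive_reach {n : ℕ}
    (A : Set (EuclideanSpace ℝ (Fin n)))
    (ρ : ℝ) (hρ : 0 < ρ) (hreach : ENNReal.ofReal ρ < reach Aᶜ) :
    A = erosion A (Metric.ball (0 : EuclideanSpace ℝ (Fin n)) ρ) +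
        Metric.ball (0 : EuclideanSpace ℝ (Fin n)) ρ := by
  refine (subset_erosion_ball_add_ball fun a ha => ?_).antisymm (erosion_add_subset _ _)
  rcases Aᶜ.eq_empty_or_nonempty with hA | hA
  · exact ⟨a, by simpa using hρ, by simp [compl_empty_iff.1 hA]⟩
  have hunp : ∀ x, infDist x Aᶜ < ρ → ∃! b, b ∈ Aᶜ ∧ dist x b = infDist x Aᶜ := fun x hx => by
    obtain ⟨b, hb, hxb⟩ := (infDist_lt_iff hA).1 hx
    refine mem_unp_of_edist_lt_reach hb (lt_trans ?_ hreach)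
    rwa [edist_dist, ENNReal.ofReal_lt_ofReal_iff hρ]
  obtain ⟨c, hac, hc⟩ := exists_dist_lt_le_infDist hρ hunp fun h => h ha
  exact ⟨c, hac, (ball_subset_ball hc).trans ball_infDist_compl_subset⟩
end

section
/- There exists a bounded open set E ⊆ ℝ² and δ > 0 such that E equals its opening by the open ball of radius δ (E = E ∘ U(0,δ)) but reach(Eᶜ) < δ. Specifically, for x, y ∈ ℝ² with ‖x - y‖ = 2R and any δ > R, the set E = U(x,δ) ∪ U(y,δ) has this property. -/
open MeasureTheory Metric Set
open scoped ENNReal Pointwise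

/-- Morphological opening `A ∘ F = (A ⊖ F) + F`. -/
def opening {n : ℕ} (A F : Set (EuclideanSpace ℝ (Fin n))) : Set (EuclideanSpace ℝ (Fin n)) :=
  erosion A F + F

/-!
A union of translates of `U(0, δ)` is fixed by the opening with `U(0, δ)`, since opening keeps
every translate contained in the set. For the reach, let `m` be the midpoint of `x` and `y`,
`R = |x - y| / 2` and `h = √(δ² - R²) < δ`. The ball `U(m, h)` lies in `E`, while the two points
`m ± h u` with `u ⟂ x - y` a unit vector lie on both spheres, hence in `Eᶜ`. So `m` has two
nearest points in `Eᶜ`, at distance `h` from each of them, and the reach of `Eᶜ` at `m + h u`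
is at most `h`.
-/

open scoped RealInnerProductSpace

section Opening

variable {n : ℕ}

lemma opening_subset (A F : Set (EuclideanSpace ℝ (Fin n))) : opening A F ⊆ A := by
  rintro _ ⟨c, hc, f, hf, rfl⟩
  exact hc f hf

lemma vadd_subset_opening {A F : Set (EuclideanSpace ℝ (Fin n))} {c : EuclideanSpace ℝ (Fin n)}
    (h : c +ᵥ F ⊆ A) : c +ᵥ F ⊆ opening A F := by
  rintro _ ⟨f, hf, rfl⟩
  exact Set.add_mem_add (fun f' hf' => h ⟨f', hf', rfl⟩) hf

lemma ball_subset_opening_ball {A : Set (EuclideanSpace ℝ (Fin n))}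
    {c : EuclideanSpace ℝ (Fin n)} {r : ℝ} (h : ball c r ⊆ A) :
    ball c r ⊆ opening A (ball 0 r) := by
  rw [← vadd_ball_zero] at h ⊢
  exact vadd_subset_opening h

lemma opening_union_ball_eq (x y : EuclideanSpace ℝ (Fin n)) (r : ℝ) :
    opening (ball x r ∪ ball y r) (ball 0 r) = ball x r ∪ ball y r :=
  (opening_subset _ _).antisymm <| union_subset
    (ball_subset_opening_ball subset_union_left) (ball_subset_opening_ball subset_union_right)

end Opening

section Reach

variable {n : ℕ} {A : Set (EuclideanSpace ℝ (Fin n))} {z a b : EuclideanSpace ℝ (Fin n)}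

lemma reach_le_edist_of_notMem_Unp (ha : a ∈ A) (hz : z ∉ Unp A) :
    reach A ≤ edist z a := by
  refine (iInf₂_le a ha).trans (sSup_le fun r hr => ?_)
  by_contra! hlt
  exact hz (hr (mem_eball.mpr hlt))

lemma notMem_Unp_of_ball_subset_compl {r : ℝ} (hball : ball z r ⊆ Aᶜ) (ha : a ∈ A)
    (hb : b ∈ A) (hab : a ≠ b) (hza : dist z a = r) (hzb : dist z b = r) : z ∉ Unp A := by
  have hinf : infDist z A = r := by
    refine le_antisymm ((infDist_le_dist_of_mem ha).trans_eq hza)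
      ((le_infDist ⟨a, ha⟩).mpr fun w hw => ?_)
    by_contra! hlt
    exact hball (mem_ball'.mpr hlt) hw
  rintro ⟨c, -, huniq⟩
  exact hab <| (huniq a ⟨ha, hza.trans hinf.symm⟩).trans
    (huniq b ⟨hb, hzb.trans hinf.symm⟩).symm

end Reach

section Geometry

variable {E : Type*} [NormedAddCommGroup E] [InnerProductSpace ℝ E]

lemma exists_norm_eq_inner_eq_zero [FiniteDimensional ℝ E] (hE : 2 ≤ Module.finrank ℝ E)
    (v : E) {r : ℝ} (hr : 0 ≤ r) : ∃ w : E, ‖w‖ = r ∧ ⟪w, v⟫ = 0 := by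
  have hdim : 1 ≤ Module.finrank ℝ (ℝ ∙ v)ᗮ := by
    have := (ℝ ∙ v).finrank_add_finrank_orthogonal
    have : Module.finrank ℝ (ℝ ∙ v) ≤ 1 := (finrank_span_le_card {v}).trans (by simp)
    omega
  obtain ⟨u, hu, hu0⟩ := Submodule.exists_mem_ne_zero_of_ne_bot
    (Submodule.one_le_finrank_iff.mp hdim)
  refine ⟨(r / ‖u‖) • u, ?_, ?_⟩
  · rw [norm_smul, Real.norm_of_nonneg (by positivity),
      div_mul_cancel₀ _ (norm_ne_zero_iff.mpr hu0)]
  · rw [real_inner_smul_left, real_inner_comm,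
      Submodule.mem_orthogonal_singleton_iff_inner_right.mp hu, mul_zero]

lemma dist_midpoint_add_left_sq {x y v : E} (hv : ⟪v, x - y⟫ = 0) :
    dist (midpoint ℝ x y + v) x ^ 2 = ‖v‖ ^ 2 + (dist x y / 2) ^ 2 := by
  have hsplit : midpoint ℝ x y + v - x = v + (2⁻¹ : ℝ) • (y - x) := by
    rw [midpoint_eq_smul_add, invOf_eq_inv]; module
  have horth : ⟪v, (2⁻¹ : ℝ) • (y - x)⟫ = 0 := by
    rw [real_inner_smul_right, ← neg_sub, inner_neg_right, hv, neg_zero, mul_zero]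
  rw [dist_eq_norm, hsplit, norm_add_sq_real, horth, norm_smul, dist_eq_norm']
  norm_num
  ring

lemma dist_midpoint_add_right_sq {x y v : E} (hv : ⟪v, x - y⟫ = 0) :
    dist (midpoint ℝ x y + v) y ^ 2 = ‖v‖ ^ 2 + (dist x y / 2) ^ 2 := by
  have hv' : ⟪v, y - x⟫ = 0 := by rw [← neg_sub, inner_neg_right, hv, neg_zero]
  rw [midpoint_comm, dist_midpoint_add_left_sq hv', dist_comm]

lemma ball_midpoint_subset_union_ball (x y : E) {h δ : ℝ} (hδ₀ : 0 ≤ δ)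
    (hδ : h ^ 2 + (dist x y / 2) ^ 2 ≤ δ ^ 2) :
    ball (midpoint ℝ x y) h ⊆ ball x δ ∪ ball y δ := by
  intro z hz
  set m := midpoint ℝ x y with hm
  have hzm : ‖z - m‖ ^ 2 < h ^ 2 :=
    pow_lt_pow_left₀ (mem_ball_iff_norm.mp hz) (norm_nonneg _) two_ne_zero
  have hmx : ‖m - x‖ = dist x y / 2 := by
    rw [← dist_eq_norm, dist_comm, dist_left_midpoint]; norm_num; ring
  have hmy : ‖m - y‖ = dist x y / 2 := by
    rw [← dist_eq_norm, dist_comm, dist_right_midpoint]; norm_num; ring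
  have hsum : m - x + (m - y) = 0 := by rw [hm, midpoint_eq_smul_add, invOf_eq_inv]; module
  have hside (p : E) (hp : ‖m - p‖ = dist x y / 2) (hzp : ⟪z - m, m - p⟫ ≤ 0) :
      z ∈ ball p δ := by
    rw [mem_ball_iff_norm, ← pow_lt_pow_iff_left₀ (norm_nonneg _) hδ₀ two_ne_zero,
      show z - p = (z - m) + (m - p) by abel, norm_add_sq_real, hp]
    linarith
  -- `z` lies on the side of the perpendicular bisector of `x` or on that of `y`.
  have hopp : ⟪z - m, m - x⟫ + ⟪z - m, m - y⟫ = 0 := by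
    rw [← inner_add_right, hsum, inner_zero_right]
  rcases le_total ⟪z - m, m - y⟫ 0 with hle | hle
  · exact Or.inr (hside y hmy hle)
  · exact Or.inl (hside x hmx (by linarith))

lemma midpoint_add_notMem_union_ball {x y v : E} {δ : ℝ} (hv : ⟪v, x - y⟫ = 0)
    (hδ : δ ^ 2 ≤ ‖v‖ ^ 2 + (dist x y / 2) ^ 2) :
    midpoint ℝ x y + v ∉ ball x δ ∪ ball y δ := by
  simp only [mem_union, mem_ball, not_or, not_lt]
  exact ⟨le_of_pow_le_pow_left₀ two_ne_zero dist_nonneg (dist_midpoint_add_left_sq hv ▸ hδ),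
    le_of_pow_le_pow_left₀ two_ne_zero dist_nonneg (dist_midpoint_add_right_sq hv ▸ hδ)⟩

end Geometry

lemma reach_compl_union_ball_le {n : ℕ} (hn : 2 ≤ n) {x y : EuclideanSpace ℝ (Fin n)} {δ : ℝ}
    (hδ : dist x y / 2 < δ) :
    reach (ball x δ ∪ ball y δ)ᶜ ≤ ENNReal.ofReal √(δ ^ 2 - (dist x y / 2) ^ 2) := by
  set h := √(δ ^ 2 - (dist x y / 2) ^ 2)
  have hδ₀ : 0 < δ := (div_nonneg dist_nonneg zero_le_two).trans_lt hδ
  have hpos : 0 < δ ^ 2 - (dist x y / 2) ^ 2 := by nlinarith [dist_nonneg (x := x) (y := y)]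
  have hh : 0 < h := Real.sqrt_pos.mpr hpos
  have hh2 : h ^ 2 = δ ^ 2 - (dist x y / 2) ^ 2 := Real.sq_sqrt hpos.le
  obtain ⟨w, hw, hwxy⟩ := exists_norm_eq_inner_eq_zero
    (by rwa [finrank_euclideanSpace_fin]) (x - y) hh.le
  set m := midpoint ℝ x y
  have hout (v : EuclideanSpace ℝ (Fin n)) (hv : ‖v‖ = h) (hvxy : ⟪v, x - y⟫ = 0) :
      m + v ∈ (ball x δ ∪ ball y δ)ᶜ :=
    midpoint_add_notMem_union_ball hvxy (by rw [hv, hh2]; linarith)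
  have hw' : ‖-w‖ = h := by rw [norm_neg, hw]
  have hwxy' : ⟪-w, x - y⟫ = 0 := by rw [inner_neg_left, hwxy, neg_zero]
  have hm : m ∉ Unp (ball x δ ∪ ball y δ)ᶜ := by
    refine notMem_Unp_of_ball_subset_compl (a := m + w) (b := m + -w) ?_ (hout w hw hwxy)
      (hout (-w) hw' hwxy') ?_ ((dist_self_add_right w m).trans hw)
      ((dist_self_add_right (-w) m).trans hw')
    · rw [compl_compl]
      exact ball_midpoint_subset_union_ball x y hδ₀.le (by linarith)
    · intro heq
      have h2w : (2 : ℝ) • w = 0 := by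
        rw [two_smul]; nth_rewrite 2 [add_left_cancel heq]; exact add_neg_cancel w
      rw [smul_eq_zero_iff_right two_ne_zero] at h2w
      exact hh.ne' (by rw [← hw, h2w, norm_zero])
  calc reach (ball x δ ∪ ball y δ)ᶜ ≤ edist m (m + w) :=
        reach_le_edist_of_notMem_Unp (hout w hw hwxy) hm
    _ = ENNReal.ofReal h := by rw [edist_dist, dist_self_add_right, hw]

theorem two_balls_opening_but_small_reach
    (R δ : ℝ) (hR : 0 < R) (hδ : R < δ)
    (x y : EuclideanSpace ℝ (Fin 2)) (hxy : ‖x - y‖ = 2 * R) :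
    (Metric.ball x δ ∪ Metric.ball y δ) =
        opening (Metric.ball x δ ∪ Metric.ball y δ)
          (Metric.ball (0 : EuclideanSpace ℝ (Fin 2)) δ) ∧
      reach (Metric.ball x δ ∪ Metric.ball y δ)ᶜ < ENNReal.ofReal δ := by
  have hR' : dist x y / 2 = R := by rw [dist_eq_norm, hxy]; ring
  refine ⟨(opening_union_ball_eq x y δ).symm, ?_⟩
  refine (reach_compl_union_ball_le le_rfl (hR' ▸ hδ)).trans_lt ?_
  rw [hR', ENNReal.ofReal_lt_ofReal_iff (hR.trans hδ)]
  exact (Real.sqrt_lt' (hR.trans hδ)).mpr (by nlinarith)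
end

section
/- Let U ⊆ ℝⁿ be bounded open with reach(Uᶜ) > ρ > 0, let δ ∈ (0, ρ), and let A ⊆ U be measurable with vol(A) < δⁿ·n^{-n/2}. Then for E = U \ A there exists a finite measurable partition 𝓡_E of E of some cardinality M such that for any i.i.d. uniform sample 𝕏 of N points from E, P(B(𝕏, 3δ) ⊇ E) ≥ 1 - M·exp(-(δⁿ n^{-n/2} - vol(A))·N / vol(E)). -/
open MeasureTheory Metric Set ProbabilityTheory
open scoped ENNReal

/-!
Reach of `Uᶜ` beyond `δ` makes every point `x ∈ U` lie within `δ` of the centre of a ball of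
radius `δ` inside `U`. To find it, maximise `infDist · Uᶜ - λ · dist · x` (with
`λ = 1 - infDist x Uᶜ / δ`) over a compact set: at a maximiser of depth `< δ` the nearest point is
unique, so moving outwards along the normal increases `infDist` at a rate close to `1 > λ`, which
is impossible. Such a ball contains a cube of side `2δ/√n`, so it meets `U \ A` in volume at least
`δⁿ n^{-n/2} - vol A`. Cut `U \ A` into finitely many pieces, each within `δ` of a point of
`U \ A`; a sample in the deep ball attached to a piece is within `3δ` of the whole piece, and a
union bound over the pieces, with `1 - p ≤ exp (-p)` for the `N` independent misses, gives the
estimate.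
-/

open Filter Topology

theorem ball_subset_unp_of_lt_reach {n : ℕ} {F : Set (EuclideanSpace ℝ (Fin n))} {r : ℝ}
    (h : ENNReal.ofReal r < reach F) {a : EuclideanSpace ℝ (Fin n)} (ha : a ∈ F) :
    ball a r ⊆ Unp F := by
  obtain ⟨s, hs, hrs⟩ := lt_sSup_iff.mp (h.trans_le (iInf₂_le a ha))
  refine fun w hw => hs (Metric.mem_eball.mpr ?_)
  rw [edist_dist]
  exact (ENNReal.ofReal_le_ofReal (mem_ball.mp hw).le).trans_lt hrs

section NearestPoint

variable {V : Type*} [NormedAddCommGroup V] [InnerProductSpace ℝ V]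

theorem sq_dist_add_smul_sub_ge {y q z : V} (hq : dist y q ≤ dist y z) {t : ℝ} (ht : 0 ≤ t) :
    ((1 + t) * dist y q) ^ 2 - t * dist z q ^ 2 ≤ dist (y + t • (y - q)) z ^ 2 := by
  have hinner : 2 * inner ℝ (y - q) (z - q) ≤ ‖z - q‖ ^ 2 := by
    have h := pow_le_pow_left₀ dist_nonneg hq 2
    rw [dist_eq_norm, dist_eq_norm, show y - z = (y - q) - (z - q) by abel,
      norm_sub_sq_real (y - q) (z - q)] at h
    linarith
  rw [dist_eq_norm (y + _) z, show y + t • (y - q) - z = (1 + t) • (y - q) - (z - q) by module,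
    norm_sub_sq_real, norm_smul, real_inner_smul_left, Real.norm_of_nonneg (by linarith),
    dist_eq_norm, dist_eq_norm]
  nlinarith [mul_nonneg (by linarith : (0 : ℝ) ≤ 1 + t) (sub_nonneg.2 hinner)]

theorem dist_add_smul_sub_self (y q : V) {t : ℝ} (ht : 0 ≤ t) :
    dist (y + t • (y - q)) y = t * dist y q := by
  rw [dist_self_add_left, norm_smul, Real.norm_of_nonneg ht, dist_eq_norm]

theorem exists_pos_forall_dist_lt_of_dist_lt_infDist_add {X : Type*} [MetricSpace X]
    [ProperSpace X] {F : Set X} (hF : IsClosed F) {y q : X}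
    (huniq : ∀ a ∈ F, dist y a = infDist y F → a = q) {ε : ℝ} (hε : 0 < ε) :
    ∃ η > 0, ∀ z ∈ F, dist y z < infDist y F + η → dist z q < ε := by
  set K := (F ∩ closedBall y (infDist y F + 1)) \ ball q ε
  have hK : IsCompact K := ((isCompact_closedBall _ _).inter_left hF).diff isOpen_ball
  have hfar : ∀ z ∈ K, infDist y F < dist y z := by
    rintro z ⟨⟨hzF, -⟩, hzq⟩
    refine (infDist_le_dist_of_mem hzF).lt_of_ne fun h => hzq ?_
    rw [huniq z hzF h.symm]
    exact mem_ball_self hε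
  obtain ⟨a, ha, haK⟩ :=
    hK.exists_forall_le' (by fun_prop : Continuous fun z => dist y z).continuousOn hfar
  refine ⟨min 1 (a - infDist y F), lt_min one_pos (sub_pos.2 ha), fun z hzF hz => ?_⟩
  by_contra hzq
  have hzK : z ∈ K := ⟨⟨hzF, by
    rw [mem_closedBall, dist_comm]; linarith [min_le_left 1 (a - infDist y F)]⟩,
    fun h => hzq (mem_ball.1 h)⟩
  linarith [haK z hzK, min_le_right 1 (a - infDist y F)]

variable [ProperSpace V]

theorem eventually_add_mul_lt_infDist_add_smul_s8 {F : Set V} (hF : IsClosed F) {y q : V}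
    (hqF : q ∈ F) (hyq : dist y q = infDist y F)
    (huniq : ∀ a ∈ F, dist y a = infDist y F → a = q) (hpos : 0 < infDist y F)
    {l : ℝ} (hl0 : 0 ≤ l) (hl1 : l < 1) :
    ∀ᶠ η in 𝓝[>] 0, infDist y F + l * η < infDist (y + (η / infDist y F) • (y - q)) F := by
  set d := infDist y F
  obtain ⟨η₀, hη₀, hnear⟩ := exists_pos_forall_dist_lt_of_dist_lt_infDist_add hF huniq
    (mul_pos hpos (sub_pos.2 hl1))
  filter_upwards [Ioo_mem_nhdsGT (half_pos hη₀)] with η ⟨hη, hηη₀⟩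
  set y' := y + (η / d) • (y - q)
  have ht : 0 ≤ η / d := div_nonneg hη.le hpos.le
  have hy'y : dist y' y = η := by
    rw [dist_add_smul_sub_self y q ht, hyq, div_mul_cancel₀ _ hpos.ne']
  obtain ⟨z, hzF, hz⟩ := hF.exists_infDist_eq_dist ⟨q, hqF⟩ y'
  have hy'F : infDist y' F ≤ d + η := hy'y ▸ infDist_le_infDist_add_dist
  have hzq : dist z q < d * (1 - l) := hnear z hzF <| by
    linarith [dist_triangle y y' z, dist_comm y y']
  -- `z` is close to `q`, so the second-order loss `(η / d) * dist z q ^ 2` is `o(η)`.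
  have hlower := sq_dist_add_smul_sub_ge (hyq.trans_le (infDist_le_dist_of_mem hzF)) ht
  rw [hyq, ← hz, show (1 + η / d) * d = d + η by field_simp] at hlower
  have hsmall : η / d * dist z q ^ 2 ≤ η * d * (1 - l) := by
    rw [div_mul_eq_mul_div, div_le_iff₀ hpos]
    have h1 := pow_le_pow_left₀ dist_nonneg hzq.le 2
    have h2 : dist z q ^ 2 ≤ d ^ 2 * (1 - l) := h1.trans (by
      nlinarith [mul_nonneg (sq_nonneg d) (mul_nonneg hl0 (sub_nonneg.2 hl1.le))])
    nlinarith [mul_le_mul_of_nonneg_left h2 hη.le]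
  refine lt_of_pow_lt_pow_left₀ 2 infDist_nonneg ?_
  nlinarith [mul_pos (mul_pos hη hpos) (sub_pos.2 hl1), mul_nonneg (mul_nonneg hη.le hη.le)
    (mul_nonneg (sub_nonneg.2 hl1.le) (by linarith : 0 ≤ 1 + l))]

theorem infDist_eq_of_isMaxOn {F : Set V} (hF : IsClosed F) {δ : ℝ}
    (hunp : ∀ a ∈ F, ball a δ ⊆ {w | ∃! b, b ∈ F ∧ dist w b = infDist w F})
    {l : ℝ} (hl0 : 0 ≤ l) (hl1 : l < 1) {x y : V} {R : ℝ}
    (hmax : IsMaxOn (fun w => infDist w F - l * dist w x)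
      ({w | infDist w F ≤ δ} ∩ closedBall x R) y)
    (hyδ : infDist y F ≤ δ) (hpos : 0 < infDist y F) (hyx : dist y x < R) :
    infDist y F = δ := by
  set d := infDist y F
  refine hyδ.antisymm (not_lt.1 fun hdδ => ?_)
  have hne : F.Nonempty := nonempty_iff_ne_empty.2 fun h => by simp [d, h] at hpos
  obtain ⟨q, hqF, hq⟩ := hF.exists_infDist_eq_dist hne y
  have huniq : ∀ a ∈ F, dist y a = d → a = q := fun a ha had =>
    (hunp q hqF (mem_ball.2 (hq ▸ hdδ))).unique ⟨ha, had⟩ ⟨hqF, hq.symm⟩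
  obtain ⟨η, hgrow, hη, hηδR⟩ := (Filter.Eventually.and
    (eventually_add_mul_lt_infDist_add_smul_s8 hF hqF hq.symm huniq hpos hl0 hl1)
    (Ioo_mem_nhdsGT (lt_min (sub_pos.2 hdδ) (sub_pos.2 hyx)))).exists
  obtain ⟨hηδ, hηR⟩ := lt_min_iff.1 hηδR
  set y' := y + (η / d) • (y - q)
  have hy'y : dist y' y = η := by
    rw [dist_add_smul_sub_self y q (div_nonneg hη.le hpos.le), hq.symm,
      div_mul_cancel₀ _ hpos.ne']
  have hy'F : infDist y' F ≤ d + η := hy'y ▸ infDist_le_infDist_add_dist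
  have hy'x : dist y' x ≤ η + dist y x := hy'y ▸ dist_triangle y' y x
  have hG : infDist y' F - l * dist y' x ≤ d - l * dist y x :=
    isMaxOn_iff.1 hmax y' ⟨(by linarith : infDist y' F ≤ δ),
      mem_closedBall.2 (by linarith)⟩
  nlinarith [mul_le_mul_of_nonneg_left hy'x hl0]

theorem exists_dist_le_ball_subset_compl {F : Set V} (hF : IsClosed F) {δ : ℝ} (hδ : 0 < δ)
    (hunp : ∀ a ∈ F, ball a δ ⊆ {w | ∃! b, b ∈ F ∧ dist w b = infDist w F})
    {x : V} (hx : x ∉ F) : ∃ y, dist x y ≤ δ ∧ ball y δ ⊆ Fᶜ := by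
  rcases F.eq_empty_or_nonempty with rfl | hne
  · exact ⟨x, by simpa using hδ.le, by simp⟩
  set d := infDist x F
  have hd : 0 < d := (hF.notMem_iff_infDist_pos hne).1 hx
  rcases le_or_gt δ d with hδd | hdδ
  · exact ⟨x, by simpa using hδ.le, (ball_subset_ball hδd).trans ball_infDist_subset_compl⟩
  set l := (δ - d) / δ
  have hl0 : 0 < l := div_pos (by linarith) hδ
  have hl1 : l < 1 := (div_lt_one hδ).2 (by linarith)
  have hlδ : l * δ = δ - d := div_mul_cancel₀ _ hδ.ne'
  set K := {w | infDist w F ≤ δ} ∩ closedBall x (2 * δ)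
  have hK : IsCompact K := (isCompact_closedBall x _).inter_left
    (isClosed_le (continuous_infDist_pt F) continuous_const)
  have hxK : x ∈ K := ⟨hdδ.le, mem_closedBall_self (by positivity)⟩
  obtain ⟨y, ⟨(hyδ : infDist y F ≤ δ), -⟩, hmax⟩ := hK.exists_isMaxOn ⟨x, hxK⟩
    (by fun_prop : Continuous fun w => infDist w F - l * dist w x).continuousOn
  have hGy : d ≤ infDist y F - l * dist y x := by simpa [d] using isMaxOn_iff.1 hmax x hxK
  have hyx : dist y x ≤ δ := le_of_mul_le_mul_left (by linarith) hl0
  have hyF : infDist y F = δ := infDist_eq_of_isMaxOn hF hunp hl0.le hl1 hmax hyδ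
    (by nlinarith [mul_nonneg hl0.le (dist_nonneg : 0 ≤ dist y x)]) (by linarith)
  exact ⟨y, by rwa [dist_comm], hyF ▸ ball_infDist_subset_compl⟩

end NearestPoint

theorem EuclideanSpace.ofReal_pow_mul_rpow_le_volume_ball {n : ℕ}
    (y : EuclideanSpace ℝ (Fin n)) {δ : ℝ} (hδ : 0 < δ) :
    ENNReal.ofReal (δ ^ n * (n : ℝ) ^ (-(n : ℝ) / 2)) ≤ volume (ball y δ) := by
  rcases n.eq_zero_or_pos with rfl | hn
  · have : ball y δ = univ := eq_univ_of_forall fun z => by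
      simpa [Subsingleton.elim z y] using hδ
    simp [this, volume_euclideanSpace_eq_dirac]
  have hsqrt : 0 < √(n : ℝ) := Real.sqrt_pos.2 (by exact_mod_cast hn)
  set s := δ / √(n : ℝ)
  have hs : 0 < s := div_pos hδ hsqrt
  have hsub : ball (WithLp.ofLp y) s ⊆ WithLp.toLp 2 ⁻¹' ball y δ := by
    intro z hz
    have hzi : ∀ i, dist (z i) (y i) ^ 2 < s ^ 2 := fun i =>
      pow_lt_pow_left₀ ((dist_pi_lt_iff hs).1 hz i) dist_nonneg two_ne_zero
    have hsum : ∑ i, dist (z i) (y i) ^ 2 < δ ^ 2 := by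
      calc ∑ i, dist (z i) (y i) ^ 2 < ∑ _i : Fin n, s ^ 2 :=
            Finset.sum_lt_sum_of_nonempty ⟨⟨0, hn⟩, Finset.mem_univ _⟩ fun i _ => hzi i
        _ = δ ^ 2 := by
          rw [Finset.sum_const, Finset.card_univ, Fintype.card_fin, nsmul_eq_mul, div_pow,
            Real.sq_sqrt (Nat.cast_nonneg n)]
          field_simp
    rw [mem_preimage, mem_ball, EuclideanSpace.dist_eq]
    simpa using Real.sqrt_lt_sqrt (by positivity) hsum |>.trans_eq (Real.sqrt_sq hδ.le)
  calc ENNReal.ofReal (δ ^ n * (n : ℝ) ^ (-(n : ℝ) / 2)) ≤ ENNReal.ofReal ((2 * s) ^ n) := by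
        have hrpow : (n : ℝ) ^ (-(n : ℝ) / 2) = (√(n : ℝ) ^ n)⁻¹ := by
          rw [Real.sqrt_eq_rpow, ← Real.rpow_natCast, ← Real.rpow_mul (Nat.cast_nonneg n),
            ← Real.rpow_neg (Nat.cast_nonneg n)]
          ring_nf
        rw [hrpow, ← div_eq_mul_inv, ← div_pow]
        exact ENNReal.ofReal_le_ofReal (pow_le_pow_left₀ hs.le (by linarith) n)
    _ = volume (ball (WithLp.ofLp y) s) := by rw [Real.volume_pi_ball _ hs, Fintype.card_fin]
    _ ≤ volume (WithLp.toLp 2 ⁻¹' ball y δ) := measure_mono hsub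
    _ = volume (ball y δ) :=
      (PiLp.volume_preserving_toLp (Fin n)).measure_preimage measurableSet_ball.nullMeasurableSet

theorem TotallyBounded.exists_measurable_partition {α : Type*} [PseudoMetricSpace α]
    [MeasurableSpace α] [OpensMeasurableSpace α] {E : Set α} (hE : TotallyBounded E)
    (hEm : MeasurableSet E) {r : ℝ} (hr : 0 < r) :
    ∃ 𝓡 : Finset (Set α), (∀ R ∈ 𝓡, MeasurableSet R) ∧
      (∀ R ∈ 𝓡, ∀ R' ∈ 𝓡, R ≠ R' → Disjoint R R') ∧
      ⋃₀ (𝓡 : Set (Set α)) = E ∧ ∀ R ∈ 𝓡, ∃ x ∈ E, R ⊆ ball x r := by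
  classical
  obtain ⟨t, htE, htfin, hcover⟩ := finite_approx_of_totallyBounded hE r hr
  have := htfin.to_subtype
  obtain ⟨m, ⟨e⟩⟩ := Finite.exists_equiv_fin t
  set f : Fin m → Set α := fun i => E ∩ ball (e.symm i) r
  have hf : ∀ i, MeasurableSet (f i) := fun i => hEm.inter measurableSet_ball
  refine ⟨Finset.univ.image (disjointed f), ?_, ?_, ?_, ?_⟩
  · simp only [Finset.mem_image, Finset.mem_univ, true_and, forall_exists_index,
      forall_apply_eq_imp_iff]
    intro i
    rw [disjointed_eq_inter_compl]
    exact (hf i).inter (.biInter (to_countable _) fun j _ => (hf j).compl)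
  · simp only [Finset.mem_image, Finset.mem_univ, true_and]
    rintro _ ⟨i, rfl⟩ _ ⟨j, rfl⟩ hne
    exact disjoint_disjointed f fun hij => hne (hij ▸ rfl)
  · rw [Finset.coe_image, Finset.coe_univ, image_univ, sUnion_range, iUnion_disjointed]
    refine (iUnion_subset fun i => inter_subset_left).antisymm fun z hz => ?_
    obtain ⟨c, hct, hzc⟩ := mem_iUnion₂.1 (hcover hz)
    exact mem_iUnion.2 ⟨e ⟨c, hct⟩, hz, by simpa using hzc⟩
  · simp only [Finset.mem_image, Finset.mem_univ, true_and]
    rintro _ ⟨i, rfl⟩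
    exact ⟨e.symm i, htE (e.symm i).2, (disjointed_subset f i).trans inter_subset_right⟩

section Sampling

variable {Ω α : Type*} [MeasurableSpace Ω] [MeasurableSpace α] {P : Measure Ω}
  [IsProbabilityMeasure P] {μ : Measure α} {E S : Set α}

theorem measure_preimage_compl_le_exp {Y : Ω → α}
    (hlaw : ∀ B, MeasurableSet B → P (Y ⁻¹' B) = μ (B ∩ E) / μ E)
    (hS : MeasurableSet S) (hSE : S ⊆ E) :
    P (Y ⁻¹' Sᶜ) ≤ ENNReal.ofReal (Real.exp (-μ.real S / μ.real E)) := by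
  rcases eq_or_ne (μ.real E) 0 with h0 | h0
  · simpa [h0] using prob_le_one
  have hE : μ E ≠ ⊤ := fun h => h0 (by simp [Measure.real, h])
  have hE0 : μ E ≠ 0 := fun h => h0 (by simp [Measure.real, h])
  have hES : μ (E \ S) ≠ ⊤ := (measure_mono sdiff_subset |>.trans_lt hE.lt_top).ne
  rw [hlaw _ hS.compl, inter_comm, ← sdiff_eq, ENNReal.le_ofReal_iff_toReal_le
    (ENNReal.div_ne_top hES hE0) (Real.exp_nonneg _), ENNReal.toReal_div]
  change μ.real (E \ S) / μ.real E ≤ _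
  rw [measureReal_sdiff hSE hS hE, sub_div, div_self h0, neg_div]
  linarith [Real.add_one_le_exp (-(μ.real S / μ.real E))]

variable {N : ℕ} {X : Fin N → Ω → α}

theorem measure_iInter_preimage_compl_le_exp (hX : iIndepFun X P)
    (hlaw : ∀ i, ∀ B, MeasurableSet B → P (X i ⁻¹' B) = μ (B ∩ E) / μ E)
    (hS : MeasurableSet S) (hSE : S ⊆ E) :
    P (⋂ i, X i ⁻¹' Sᶜ) ≤ ENNReal.ofReal (Real.exp (-μ.real S * N / μ.real E)) := by
  have hprod := hX.measure_inter_preimage_eq_mul Finset.univ (sets := fun _ => Sᶜ)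
    fun _ _ => hS.compl
  simp only [Finset.mem_univ, iInter_true] at hprod
  calc P (⋂ i, X i ⁻¹' Sᶜ) = ∏ i, P (X i ⁻¹' Sᶜ) := hprod
    _ ≤ ∏ _i : Fin N, ENNReal.ofReal (Real.exp (-μ.real S / μ.real E)) :=
      Finset.prod_le_prod' fun i _ => measure_preimage_compl_le_exp (hlaw i) hS hSE
    _ = ENNReal.ofReal (Real.exp (-μ.real S * N / μ.real E)) := by
      rw [Finset.prod_const, Finset.card_univ, Fintype.card_fin,
        ← ENNReal.ofReal_pow (Real.exp_nonneg _), ← Real.exp_nat_mul]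
      ring_nf

theorem one_sub_card_mul_le_measure_cover (hX : iIndepFun X P)
    (hlaw : ∀ i, ∀ B, MeasurableSet B → P (X i ⁻¹' B) = μ (B ∩ E) / μ E)
    {T : α → Set α} {𝓡 : Finset (Set α)} (hcover : E ⊆ ⋃₀ (𝓡 : Set (Set α))) {c : ℝ}
    (hhit : ∀ R ∈ 𝓡, ∃ S ⊆ E, MeasurableSet S ∧ c ≤ μ.real S ∧ ∀ x ∈ S, R ⊆ T x) :
    1 - 𝓡.card * ENNReal.ofReal (Real.exp (-c * N / μ.real E)) ≤
      P {ω | E ⊆ ⋃ i, T (X i ω)} := by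
  choose! S hSE hS hcS hST using hhit
  set G := {ω | E ⊆ ⋃ i, T (X i ω)}
  have hmiss : Gᶜ ⊆ ⋃ R ∈ 𝓡, ⋂ i, X i ⁻¹' (S R)ᶜ := by
    intro ω hω
    obtain ⟨z, hzE, hz⟩ := not_subset.1 hω
    obtain ⟨R, hR, hzR⟩ := hcover hzE
    exact mem_biUnion hR (mem_iInter.2 fun i hi => hz (mem_iUnion.2 ⟨i, hST R hR _ hi hzR⟩))
  have hbad : P Gᶜ ≤ 𝓡.card * ENNReal.ofReal (Real.exp (-c * N / μ.real E)) :=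
    calc P Gᶜ ≤ ∑ R ∈ 𝓡, P (⋂ i, X i ⁻¹' (S R)ᶜ) :=
          (measure_mono hmiss).trans (measure_biUnion_finset_le _ _)
      _ ≤ ∑ _R ∈ 𝓡, ENNReal.ofReal (Real.exp (-c * N / μ.real E)) :=
          Finset.sum_le_sum fun R hR =>
            (measure_iInter_preimage_compl_le_exp hX hlaw (hS R hR) (hSE R hR)).trans <|
              ENNReal.ofReal_le_ofReal <| Real.exp_le_exp.2 <| by gcongr; exact hcS R hR
      _ = _ := by rw [Finset.sum_const, nsmul_eq_mul]
  calc 1 - _ ≤ 1 - P Gᶜ := tsub_le_tsub_left hbad 1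
    _ ≤ P G := tsub_le_iff_right.2 (measure_univ (μ := P) ▸ measure_univ_le_add_compl G)

end Sampling

theorem cover_prob_of_reach_minus_small_set_general {n : ℕ}
    (U : Set (EuclideanSpace ℝ (Fin n))) (hUopen : IsOpen U)
    (hUbdd : Bornology.IsBounded U)
    (ρ : ℝ) (hreach : ENNReal.ofReal ρ < reach Uᶜ)
    (δ : ℝ) (hδ0 : 0 < δ) (hδρ : δ < ρ)
    (A : Set (EuclideanSpace ℝ (Fin n))) (hA : MeasurableSet A)
    (hAvol : volume A < ENNReal.ofReal (δ ^ n * (n : ℝ) ^ (-(n : ℝ) / 2)))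
    {Ω : Type*} [MeasurableSpace Ω] (P : Measure Ω) [IsProbabilityMeasure P] :
    ∃ (𝓡 : Finset (Set (EuclideanSpace ℝ (Fin n)))) (M : ℕ),
      𝓡.card = M ∧
      (∀ R ∈ 𝓡, MeasurableSet R) ∧
      (∀ R ∈ 𝓡, ∀ R' ∈ 𝓡, R ≠ R' → Disjoint R R') ∧
      ⋃₀ (𝓡 : Set (Set (EuclideanSpace ℝ (Fin n)))) = U \ A ∧
      ∀ (N : ℕ) (X : Fin N → Ω → EuclideanSpace ℝ (Fin n)),
        iIndepFun X P →
        (∀ i, ∀ B : Set (EuclideanSpace ℝ (Fin n)), MeasurableSet B →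
          P (X i ⁻¹' B) = volume (B ∩ (U \ A)) / volume (U \ A)) →
        1 - (M : ℝ≥0∞) * ENNReal.ofReal (Real.exp
            (-(δ ^ n * (n : ℝ) ^ (-(n : ℝ) / 2) - (volume A).toReal) * N /
              (volume (U \ A)).toReal)) ≤
          P {ω | U \ A ⊆ ⋃ i, Metric.closedBall (X i ω) (3 * δ)} := by
  have hE : MeasurableSet (U \ A) := hUopen.measurableSet.diff hA
  obtain ⟨𝓡, hmeas, hdisj, hunion, hsmall⟩ :=
    ((hUbdd.subset sdiff_subset).isCompact_closure.totallyBounded.subset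
      subset_closure).exists_measurable_partition hE hδ0
  refine ⟨𝓡, _, rfl, hmeas, hdisj, hunion, fun N X hX hlaw => ?_⟩
  have hunp : ∀ a ∈ Uᶜ, ball a δ ⊆ Unp Uᶜ := fun a ha => ball_subset_unp_of_lt_reach
    (((ENNReal.ofReal_lt_ofReal_iff (hδ0.trans hδρ)).2 hδρ).trans hreach) ha
  refine one_sub_card_mul_le_measure_cover (T := fun x => closedBall x (3 * δ))
    (c := δ ^ n * (n : ℝ) ^ (-(n : ℝ) / 2) - volume.real A) hX hlaw hunion.ge fun R hR => ?_
  obtain ⟨x, hxE, hRx⟩ := hsmall R hR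
  obtain ⟨y, hxy, hyU⟩ :=
    exists_dist_le_ball_subset_compl hUopen.isClosed_compl hδ0 hunp (not_not.2 hxE.1)
  refine ⟨ball y δ \ A, fun z hz => ⟨compl_compl U ▸ hyU hz.1, hz.2⟩,
    measurableSet_ball.diff hA, ?_, fun z hz w hw => ?_⟩
  · have hball := (ENNReal.ofReal_le_iff_le_toReal measure_ball_lt_top.ne).1
      (EuclideanSpace.ofReal_pow_mul_rpow_le_volume_ball y hδ0)
    have hdiff := le_measureReal_sdiff (μ := volume) (s₁ := ball y δ)
      (hAvol.trans ENNReal.ofReal_lt_top).ne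
    exact (sub_le_sub_right hball _).trans hdiff
  · rw [mem_closedBall]
    linarith [dist_triangle4 w x y z, mem_ball.1 (hRx hw), mem_ball'.1 hz.1]

theorem cover_prob_of_reach_minus_small_set {n : ℕ}
    (U : Set (EuclideanSpace ℝ (Fin n))) (hUopen : IsOpen U)
    (hUbdd : Bornology.IsBounded U)
    (ρ : ℝ) (hρ : 0 < ρ) (hreach : ENNReal.ofReal ρ < reach Uᶜ)
    (δ : ℝ) (hδ0 : 0 < δ) (hδρ : δ < ρ)
    (A : Set (EuclideanSpace ℝ (Fin n))) (hA : MeasurableSet A) (hAU : A ⊆ U)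
    (hAvol : volume A < ENNReal.ofReal (δ ^ n * (n : ℝ) ^ (-(n : ℝ) / 2)))
    {Ω : Type*} [MeasurableSpace Ω] (P : Measure Ω) [IsProbabilityMeasure P] :
    ∃ (𝓡 : Finset (Set (EuclideanSpace ℝ (Fin n)))) (M : ℕ),
      𝓡.card = M ∧
      (∀ R ∈ 𝓡, MeasurableSet R) ∧
      (∀ R ∈ 𝓡, ∀ R' ∈ 𝓡, R ≠ R' → Disjoint R R') ∧
      ⋃₀ (𝓡 : Set (Set (EuclideanSpace ℝ (Fin n)))) = U \ A ∧
      ∀ (N : ℕ) (X : Fin N → Ω → EuclideanSpace ℝ (Fin n)),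
        iIndepFun X P →
        (∀ i, ∀ B : Set (EuclideanSpace ℝ (Fin n)), MeasurableSet B →
          P (X i ⁻¹' B) = volume (B ∩ (U \ A)) / volume (U \ A)) →
        1 - (M : ℝ≥0∞) * ENNReal.ofReal (Real.exp
            (-(δ ^ n * (n : ℝ) ^ (-(n : ℝ) / 2) - (volume A).toReal) * N /
              (volume (U \ A)).toReal)) ≤
          P {ω | U \ A ⊆ ⋃ i, Metric.closedBall (X i ω) (3 * δ)} :=
  cover_prob_of_reach_minus_small_set_general U hUopen hUbdd ρ hreach δ hδ0 hδρ A hA hAvol P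
end

section
/- Let A, B ⊆ ℝⁿ be sets of finite perimeter with H^{n-1}(∂_*A ∩ ∂_*B) = 0. Then H^{n-1}(∂_*(A ∪ B)) = H^{n-1}(∂_*A ∩ B^o_*) + H^{n-1}(∂_*B ∩ A^o_*), and H^{n-1}(∂_*(A ∩ B)) = H^{n-1}(∂_*A ∩ B^i_*) + H^{n-1}(∂_*B ∩ A^i_*). -/
open MeasureTheory Metric Set Filter
open scoped ENNReal Topology

variable {n : ℕ}

/-- Upper density of `A` at `x` (with normalization `rⁿ`). -/
noncomputable def upperDens (A : Set (EuclideanSpace ℝ (Fin n)))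
    (x : EuclideanSpace ℝ (Fin n)) : ℝ≥0∞ :=
  Filter.limsup (fun r : ℝ => volume (Metric.ball x r ∩ A) / ENNReal.ofReal (r ^ n)) (𝓝[>] 0)

/-- Measure-theoretic boundary `∂_* A`. -/
def mtBoundary (A : Set (EuclideanSpace ℝ (Fin n))) : Set (EuclideanSpace ℝ (Fin n)) :=
  {x | 0 < upperDens A x ∧ 0 < upperDens Aᶜ x}

/-- Measure-theoretic interior `A^i_*`. -/
def mtInterior (A : Set (EuclideanSpace ℝ (Fin n))) : Set (EuclideanSpace ℝ (Fin n)) :=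
  {x | upperDens Aᶜ x = 0}

/-- Measure-theoretic exterior `A^o_*`. -/
def mtExterior (A : Set (EuclideanSpace ℝ (Fin n))) : Set (EuclideanSpace ℝ (Fin n)) :=
  {x | upperDens A x = 0}


/-! A point where `B` has upper density zero lies in `∂_*(A ∪ B)` exactly when it lies in `∂_*A`,
since adding or removing a density-zero set changes no upper density. Splitting `∂_*(A ∪ B)`
along the Borel set `B^o_*` therefore gives `∂_*A ∩ B^o_*` on one side, and on the other side a
subset of `∂_*B` squeezed between `∂_*B ∩ A^o_*` and `(∂_*B ∩ A^o_*) ∪ (∂_*A ∩ ∂_*B)`. The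
intersection formula is the union formula for the complements, as `∂_*` is invariant under
complementation and `A^i_* = (Aᶜ)^o_*`. -/

theorem lowerSemicontinuous_measure_ball_inter {X : Type*} [PseudoMetricSpace X]
    [MeasurableSpace X] (μ : Measure X) (A : Set X) (r : ℝ) :
    LowerSemicontinuous fun x => μ (ball x r ∩ A) := by
  intro x y (hy : y < μ (ball x r ∩ A))
  have hball : ball x r = ⋃ k : ℕ, ball x (r - 1 / (k + 1)) := by
    ext z
    simp only [mem_ball, mem_iUnion]
    refine ⟨fun hz => ?_, fun ⟨k, hk⟩ => hk.trans (sub_lt_self r Nat.one_div_pos_of_nat)⟩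
    obtain ⟨k, hk⟩ := exists_nat_one_div_lt (sub_pos.2 hz)
    exact ⟨k, by linarith⟩
  have hmono : Monotone fun k : ℕ => ball x (r - 1 / (k + 1)) ∩ A := fun k l hkl =>
    inter_subset_inter_left A (ball_subset_ball (sub_le_sub_left (Nat.one_div_le_one_div hkl) r))
  rw [hball, iUnion_inter, hmono.measure_iUnion] at hy
  obtain ⟨k, hk⟩ := lt_iSup_iff.1 hy
  filter_upwards [ball_mem_nhds x (Nat.one_div_pos_of_nat (n := k))] with x' hx'
  refine hk.trans_le (measure_mono (inter_subset_inter_left A (ball_subset_ball' ?_)))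
  rw [mem_ball'] at hx'
  linarith

theorem measurable_upperDens (A : Set (EuclideanSpace ℝ (Fin n))) : Measurable (upperDens A) := by
  have hbasis := nhdsWithin_hasBasis (nhds_basis_ball_inv_nat_succ (x := (0 : ℝ))) (Ioi 0)
  change Measurable fun x => upperDens A x
  simp only [upperDens, hbasis.limsup_eq_iInf_iSup, iInf_true]
  refine .iInf fun k => (lowerSemicontinuous_biSup fun r hr => ?_).measurable
  have hr : ENNReal.ofReal (r ^ n) ≠ 0 := by
    rw [ne_eq, ENNReal.ofReal_eq_zero, not_le]
    exact pow_pos hr.2 n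
  exact (ENNReal.continuous_div_const _ hr).comp_lowerSemicontinuous
    (lowerSemicontinuous_measure_ball_inter volume A r) fun _ _ h => ENNReal.div_le_div_right h _

theorem measurableSet_mtExterior (A : Set (EuclideanSpace ℝ (Fin n))) :
    MeasurableSet (mtExterior A) :=
  measurable_upperDens A (measurableSet_singleton 0)

section Density

variable {A B N : Set (EuclideanSpace ℝ (Fin n))} {x : EuclideanSpace ℝ (Fin n)}

theorem upperDens_mono (h : A ⊆ B) (x : EuclideanSpace ℝ (Fin n)) :
    upperDens A x ≤ upperDens B x :=
  limsup_le_limsup <| .of_forall fun _ =>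
    ENNReal.div_le_div_right (measure_mono (inter_subset_inter_right _ h)) _

theorem upperDens_union_of_upperDens_eq_zero (hN : upperDens N x = 0) :
    upperDens (A ∪ N) x = upperDens A x := by
  refine le_antisymm ?_ (upperDens_mono subset_union_left x)
  have hN' : Tendsto (fun r : ℝ => volume (ball x r ∩ N) / ENNReal.ofReal (r ^ n))
      (𝓝[>] 0) (𝓝 0) :=
    tendsto_of_le_liminf_of_limsup_le zero_le hN.le
  calc upperDens (A ∪ N) x
      ≤ limsup ((fun r : ℝ => volume (ball x r ∩ A) / ENNReal.ofReal (r ^ n)) +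
          fun r : ℝ => volume (ball x r ∩ N) / ENNReal.ofReal (r ^ n)) (𝓝[>] 0) := by
        refine limsup_le_limsup <| .of_forall fun r => ?_
        simp only [Pi.add_apply, ENNReal.div_add_div_same, inter_union_distrib_left]
        gcongr
        exact measure_union_le _ _
    _ = upperDens A x := ENNReal.limsup_add_of_right_tendsto_zero hN' _

theorem mtBoundary_compl (A : Set (EuclideanSpace ℝ (Fin n))) :
    mtBoundary Aᶜ = mtBoundary A := by
  ext x
  simp only [mtBoundary, compl_compl, mem_ofPred_eq, and_comm]

theorem mtInterior_eq_mtExterior_compl (A : Set (EuclideanSpace ℝ (Fin n))) :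
    mtInterior A = mtExterior Aᶜ :=
  rfl

theorem mem_mtBoundary_union_iff_of_mem_mtExterior (hx : x ∈ mtExterior B) :
    x ∈ mtBoundary (A ∪ B) ↔ x ∈ mtBoundary A := by
  have hBA : upperDens (B \ A) x = 0 :=
    le_antisymm ((upperDens_mono sdiff_subset x).trans_eq hx) zero_le
  have hcompl : (A ∪ B)ᶜ ∪ B \ A = Aᶜ := by
    ext; simp only [mem_union, mem_compl_iff, Set.mem_sdiff]; tauto
  have hAc : upperDens Aᶜ x = upperDens (A ∪ B)ᶜ x := by
    rw [← hcompl, upperDens_union_of_upperDens_eq_zero hBA]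
  simp only [mtBoundary, mem_ofPred_eq, upperDens_union_of_upperDens_eq_zero hx, hAc]

theorem mem_mtBoundary_of_mem_mtBoundary_union (hx : x ∈ mtBoundary (A ∪ B))
    (hA : x ∉ mtExterior A) : x ∈ mtBoundary A :=
  ⟨pos_iff_ne_zero.2 hA,
    hx.2.trans_le (upperDens_mono (compl_subset_compl.2 subset_union_left) x)⟩

end Density

theorem measure_mtBoundary_union (μ : Measure (EuclideanSpace ℝ (Fin n)))
    {A B : Set (EuclideanSpace ℝ (Fin n))} (hnull : μ (mtBoundary A ∩ mtBoundary B) = 0) :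
    μ (mtBoundary (A ∪ B)) =
      μ (mtBoundary A ∩ mtExterior B) + μ (mtBoundary B ∩ mtExterior A) := by
  have hinter : mtBoundary (A ∪ B) ∩ mtExterior B = mtBoundary A ∩ mtExterior B := by
    ext x
    exact and_congr_left mem_mtBoundary_union_iff_of_mem_mtExterior
  have hlower : mtBoundary B ∩ mtExterior A ⊆ mtBoundary (A ∪ B) \ mtExterior B := by
    rintro x ⟨hxB, hxA⟩
    rw [union_comm]
    exact ⟨(mem_mtBoundary_union_iff_of_mem_mtExterior hxA).2 hxB, hxB.1.ne'⟩
  have hupper : (mtBoundary (A ∪ B) \ mtExterior B) \ (mtBoundary B ∩ mtExterior A) ⊆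
      mtBoundary A ∩ mtBoundary B := by
    rintro x ⟨⟨hx, hxB⟩, hx'⟩
    have hxB' : x ∈ mtBoundary B :=
      mem_mtBoundary_of_mem_mtBoundary_union (union_comm A B ▸ hx) hxB
    exact ⟨mem_mtBoundary_of_mem_mtBoundary_union hx fun hxA => hx' ⟨hxB', hxA⟩, hxB'⟩
  rw [← measure_inter_add_sdiff _ (measurableSet_mtExterior B), hinter,
    measure_eq_measure_of_null_sdiff hlower (measure_mono_null hupper hnull)]

theorem measure_mtBoundary_inter (μ : Measure (EuclideanSpace ℝ (Fin n)))
    {A B : Set (EuclideanSpace ℝ (Fin n))} (hnull : μ (mtBoundary A ∩ mtBoundary B) = 0) :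
    μ (mtBoundary (A ∩ B)) =
      μ (mtBoundary A ∩ mtInterior B) + μ (mtBoundary B ∩ mtInterior A) := by
  rw [← mtBoundary_compl A, ← mtBoundary_compl B] at hnull ⊢
  rw [← mtBoundary_compl (A ∩ B), compl_inter, measure_mtBoundary_union μ hnull,
    mtInterior_eq_mtExterior_compl, mtInterior_eq_mtExterior_compl]

theorem hausdorff_boundary_union_inter_general
    (A B : Set (EuclideanSpace ℝ (Fin n)))
    (hnull : μH[(n : ℝ) - 1] (mtBoundary A ∩ mtBoundary B) = 0) :
    μH[(n : ℝ) - 1] (mtBoundary (A ∪ B)) =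
        μH[(n : ℝ) - 1] (mtBoundary A ∩ mtExterior B) +
          μH[(n : ℝ) - 1] (mtBoundary B ∩ mtExterior A) ∧
      μH[(n : ℝ) - 1] (mtBoundary (A ∩ B)) =
        μH[(n : ℝ) - 1] (mtBoundary A ∩ mtInterior B) +
          μH[(n : ℝ) - 1] (mtBoundary B ∩ mtInterior A) :=
  ⟨measure_mtBoundary_union _ hnull, measure_mtBoundary_inter _ hnull⟩

theorem hausdorff_boundary_union_inter
    (A B : Set (EuclideanSpace ℝ (Fin n)))
    (hA : MeasurableSet A) (hB : MeasurableSet B)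
    (hPerA : μH[(n : ℝ) - 1] (mtBoundary A) < ⊤)
    (hPerB : μH[(n : ℝ) - 1] (mtBoundary B) < ⊤)
    (hnull : μH[(n : ℝ) - 1] (mtBoundary A ∩ mtBoundary B) = 0) :
    μH[(n : ℝ) - 1] (mtBoundary (A ∪ B)) =
        μH[(n : ℝ) - 1] (mtBoundary A ∩ mtExterior B) +
          μH[(n : ℝ) - 1] (mtBoundary B ∩ mtExterior A) ∧
      μH[(n : ℝ) - 1] (mtBoundary (A ∩ B)) =
        μH[(n : ℝ) - 1] (mtBoundary A ∩ mtInterior B) +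
          μH[(n : ℝ) - 1] (mtBoundary B ∩ mtInterior A) :=
  hausdorff_boundary_union_inter_general A B hnull
end
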